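/- arXiv:math/0612320 — 7 statements merged into one kernel-verified Lean document; each statement's English description precedes it below -/
import Mathlib

section
/- Let N ∈ 𝓜̃_Q, where Q is a nondegenerate quadratic form on V. Then for every i ≥ 1 one has (ker N^i)^⊥ = N^i V + R and (N^i V)^⊥ = ker N^i; moreover NR = 0. -/
open QuadraticMap

variable {k V : Type*}

/-- The perpendicular of a set `S ⊆ V` with respect to the bilinear form
`⟨x,y⟩ = Q(x+y) - Q x - Q y` associated to a quadratic form `Q`. -/
def perp [Field k] [AddCommGroup V] [Module k V] (Q : QuadraticForm k V) (S : Set V) :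
    Submodule k V where
  carrier := {x | ∀ y ∈ S, polar Q x y = 0}
  add_mem' := by
    intro a b ha hb y hy
    rw [polar_add_left, ha y hy, hb y hy, add_zero]
  zero_mem' := by
    intro y hy
    simp [polar]
  smul_mem' := by
    intro c a ha y hy
    rw [polar_smul_left, ha y hy, smul_zero]

/-- The radical `R = {x ∈ V : ⟨x, V⟩ = 0}` of the bilinear form associated to `Q`. -/
def rad [Field k] [AddCommGroup V] [Module k V] (Q : QuadraticForm k V) : Submodule k V :=
  perp Q Set.univ

/-- `Q` is nondegenerate: its restriction to the radical of the associated bilinear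
form is injective. -/
def QNondeg [Field k] [AddCommGroup V] [Module k V] (Q : QuadraticForm k V) : Prop :=
  Set.InjOn Q (rad Q : Set V)

/-- `𝓜̃_Q`: the set of nilpotent endomorphisms `N` with `Q(Nx) = -⟨x, Nx⟩` for all `x`
(equivalently, `1 + N` is a unipotent element of the orthogonal group `O_Q`). -/
def Mtilde [Field k] [AddCommGroup V] [Module k V] (Q : QuadraticForm k V) :
    Set (Module.End k V) :=
  {N | IsNilpotent N ∧ ∀ x, Q (N x) = - polar Q x (N x)}

/-!
Since `1 + N` is an isometry of `Q`, one gets `⟨N x, (1 + N) y⟩ = -⟨x, N y⟩`, and iterating,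
`⟨N^i x, (1 + N)^i y⟩ = ±⟨x, N^i y⟩`. As `(1 + N)^i` is invertible, `N^i x ∈ R` exactly when
`x ⊥ N^i V`. On the other hand `Q (N y) = -⟨y, N y⟩` vanishes when `N y ∈ R`, so nondegeneracy
gives `R ∩ N V = 0`; together `(N^i V)^⊥ = ker N^i`. Taking perpendiculars once more,
`(ker N^i)^⊥ = (N^i V)^⊥⊥ = N^i V + R`, as `W^⊥⊥ = W + R` by a dimension count.
-/

section Development

variable [Field k] [AddCommGroup V] [Module k V] {Q : QuadraticForm k V}

lemma mem_perp_iff {S : Set V} {x : V} : x ∈ perp Q S ↔ ∀ y ∈ S, polar Q x y = 0 := Iff.rfl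

lemma mem_rad_iff {x : V} : x ∈ rad Q ↔ ∀ y, polar Q x y = 0 := by
  simp [rad, mem_perp_iff]

lemma rad_le_perp (S : Set V) : rad Q ≤ perp Q S :=
  fun _ hx y _ => mem_rad_iff.mp hx y

section Perp

open LinearMap (BilinForm)

lemma perp_eq_orthogonal_polarBilin (W : Submodule k V) :
    perp Q (W : Set V) = BilinForm.orthogonal (polarBilin Q) W := by
  ext x
  simp only [mem_perp_iff, SetLike.mem_coe, BilinForm.mem_orthogonal_iff,
    polarBilin_apply_apply, polar_comm Q x]

lemma rad_eq_orthogonal_top : rad Q = BilinForm.orthogonal (polarBilin Q) ⊤ :=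
  perp_eq_orthogonal_polarBilin ⊤

lemma isRefl_polarBilin : BilinForm.IsRefl (polarBilin Q) := fun x y h => by
  rwa [polarBilin_apply_apply, polar_comm, ← polarBilin_apply_apply]

lemma perp_perp [FiniteDimensional k V] (W : Submodule k V) :
    perp Q (perp Q (W : Set V) : Set V) = W ⊔ rad Q := by
  set B : BilinForm k V := polarBilin Q
  simp only [perp_eq_orthogonal_polarBilin, rad_eq_orthogonal_top]
  have hle : W ⊔ B.orthogonal ⊤ ≤ B.orthogonal (B.orthogonal W) :=
    sup_le (B.le_orthogonal_orthogonal isRefl_polarBilin)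
      (B.orthogonal_le le_top)
  have hW := B.finrank_add_finrank_orthogonal isRefl_polarBilin W
  have hWperp := B.finrank_add_finrank_orthogonal isRefl_polarBilin (B.orthogonal W)
  rw [inf_eq_right.mpr (B.orthogonal_le le_top)] at hWperp
  have hsup := Submodule.finrank_sup_add_finrank_inf_eq W (B.orthogonal ⊤)
  exact (Submodule.eq_of_le_of_finrank_le hle (by omega)).symm

end Perp

section Mtilde

variable {N : Module.End k V}

lemma polar_apply_one_add_apply (hQN : ∀ x, Q (N x) = - polar Q x (N x)) (x y : V) :
    polar Q (N x) ((1 + N) y) = - polar Q x (N y) := by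
  have h := hQN (x + y)
  rw [map_add, QuadraticMap.map_add Q (N x) (N y), polar_add_left, polar_add_right,
    polar_add_right, hQN x, hQN y, polar_comm Q y (N x)] at h
  rw [LinearMap.add_apply, Module.End.one_apply, polar_add_right]
  linear_combination h

lemma polar_pow_apply_one_add_pow_apply (hQN : ∀ x, Q (N x) = - polar Q x (N x))
    (i : ℕ) (x y : V) :
    polar Q ((N ^ i) x) (((1 + N) ^ i) y) = (-1) ^ i * polar Q x ((N ^ i) y) := by
  induction i generalizing x y with
  | zero => simp
  | succ n ih =>
    have hcomm : (N ^ n) ((1 + N) y) = (1 + N) ((N ^ n) y) := by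
      rw [← Module.End.mul_apply, ← Module.End.mul_apply,
        ((Commute.one_right N).add_right (Commute.refl N)).pow_left n |>.eq]
    rw [pow_succ, pow_succ, Module.End.mul_apply, Module.End.mul_apply, ih, hcomm,
      polar_apply_one_add_apply hQN, ← Module.End.mul_apply, ← pow_succ', pow_succ]
    ring

lemma pow_apply_mem_rad_iff (hN : N ∈ Mtilde Q) (i : ℕ) (x : V) :
    (N ^ i) x ∈ rad Q ↔ x ∈ perp Q (LinearMap.range (N ^ i) : Set V) := by
  obtain ⟨hNil, hQN⟩ := hN
  have hsurj : Function.Surjective ⇑((1 + N) ^ i) :=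
    ((Module.End.isUnit_iff _).mp (hNil.isUnit_one_add.pow i)).surjective
  simp only [mem_rad_iff, mem_perp_iff, SetLike.mem_coe, LinearMap.mem_range,
    forall_exists_index, forall_apply_eq_imp_iff]
  constructor
  · intro h y
    have hy := polar_pow_apply_one_add_pow_apply hQN i x y
    rw [h] at hy
    exact (mul_eq_zero.mp hy.symm).resolve_left (pow_ne_zero i (neg_ne_zero.mpr one_ne_zero))
  · intro h z
    obtain ⟨y, rfl⟩ := hsurj z
    rw [polar_pow_apply_one_add_pow_apply hQN, h, mul_zero]

lemma apply_eq_zero_of_apply_mem_rad (hQ : QNondeg Q) (hQN : ∀ x, Q (N x) = - polar Q x (N x))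
    {y : V} (hy : N y ∈ rad Q) : N y = 0 :=
  hQ hy (Submodule.zero_mem _) <| by
    rw [hQN, polar_comm, mem_rad_iff.mp hy, neg_zero, map_zero]

lemma apply_eq_zero_of_mem_rad (hQ : QNondeg Q) (hN : N ∈ Mtilde Q) {r : V}
    (hr : r ∈ rad Q) : N r = 0 := by
  refine apply_eq_zero_of_apply_mem_rad hQ hN.2 ?_
  simpa using (pow_apply_mem_rad_iff hN 1 r).mpr (rad_le_perp _ hr)

lemma perp_range_pow (hQ : QNondeg Q) (hN : N ∈ Mtilde Q) {i : ℕ} (hi : i ≠ 0) :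
    perp Q (LinearMap.range (N ^ i) : Set V) = LinearMap.ker (N ^ i) := by
  obtain ⟨j, rfl⟩ := Nat.exists_eq_succ_of_ne_zero hi
  ext x
  rw [← pow_apply_mem_rad_iff hN, LinearMap.mem_ker, pow_succ', Module.End.mul_apply]
  exact ⟨apply_eq_zero_of_apply_mem_rad hQ hN.2, fun h => h ▸ Submodule.zero_mem _⟩

end Mtilde

end Development

/-- for `N ∈ 𝓜̃_Q` and `i ≥ 1` one has `(ker N^i)^⊥ = N^i V + R` and
`(N^i V)^⊥ = ker N^i`; moreover `NR = 0`. -/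
theorem stmt1 [Field k] [AddCommGroup V] [Module k V] [FiniteDimensional k V]
    (Q : QuadraticForm k V) (hQ : QNondeg Q) (N : Module.End k V) (hN : N ∈ Mtilde Q) :
    (∀ i : ℕ, 1 ≤ i →
        perp Q (LinearMap.ker (N ^ i) : Set V) = LinearMap.range (N ^ i) ⊔ rad Q ∧
        perp Q (LinearMap.range (N ^ i) : Set V) = LinearMap.ker (N ^ i)) ∧
    ∀ x ∈ rad Q, N x = 0 := by
  refine ⟨fun i hi => ?_, fun x hx => apply_eq_zero_of_mem_rad hQ hN hx⟩
  have hperp := perp_range_pow hQ hN (Nat.one_le_iff_ne_zero.mp hi)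
  exact ⟨by rw [← hperp, perp_perp], hperp⟩
end

section
/- Let V̄ = ⊕_{a∈ℤ} V̄^a be a finite-dimensional ℤ-graded k-vector space, f_a := dim V̄^a, and let Q̄ be a nondegenerate quadratic form on V̄ compatible with the grading. Then f_a = f_{−a} for all a. If moreover E²_*V̄ ≠ ∅, then f_0 ≥ f_{−2} ≥ f_{−4} ≥ ⋯, f_{−1} ≥ f_{−3} ≥ f_{−5} ≥ ⋯, and f_a is even for every odd a. -/
/-!
Nondegeneracy of `Q̄` together with compatibility makes the polar pairing
`V̄^a × V̄^{-a} → k` left-separating for `a ≠ 0`, so `f_a ≤ f_{-a}`, and symmetry gives equality.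
Given `T ∈ E²_*V̄`, the map `T : V̄^{-a-2} → V̄^{-a}` is injective for `a ≥ 0`: a vector it kills
lies in the radical of the form on `V̄^{-a-2}` attached to `T`, whose nondegeneracy forces it to
vanish. Finally `(x, y) ↦ ⟨x, T^a y⟩` is a nondegenerate alternating form on `V̄^{-a}` for odd
`a > 0`, so `f_{-a}` is even; splitting off hyperbolic planes proves that.
-/

open QuadraticMap

variable {k V : Type*}

section Graded

variable [Field k] [AddCommGroup V] [Module k V]

/-- `Q` is compatible with the grading `W` of `V`: `Q` vanishes on `W a` for `a ≠ 0`
and `⟨W a, W a'⟩ = 0` whenever `a + a' ≠ 0`. -/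
def CompatibleGrading (Q : QuadraticForm k V) (W : ℤ → Submodule k V) : Prop :=
  (∀ a : ℤ, a ≠ 0 → ∀ x ∈ W a, Q x = 0) ∧
    ∀ a a' : ℤ, a + a' ≠ 0 → ∀ x ∈ W a, ∀ y ∈ W a', QuadraticMap.polar Q x y = 0

/-- `T ∈ E²V̄`: `T` has degree `2`, is skew-adjoint for the polar form, and
`⟨x, Tx⟩ = 0` for `x ∈ V̄^{-1}`. -/
def InE2 (Q : QuadraticForm k V) (W : ℤ → Submodule k V) (T : Module.End k V) : Prop :=
  (∀ a : ℤ, ∀ x ∈ W a, T x ∈ W (a + 2)) ∧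
  (∀ x y : V, QuadraticMap.polar Q (T x) y + QuadraticMap.polar Q x (T y) = 0) ∧
  (∀ x ∈ W (-1 : ℤ), QuadraticMap.polar Q x (T x) = 0)

/-- `T ∈ E²_*V̄`: moreover, for every even `a = 2n ≥ 0` the quadratic form
`x ↦ Q̄(T^n x)` on `V̄^{-a}` is nondegenerate (injective on the radical of its polar
form), and for every odd `a = 2n+1 ≥ 1` the bilinear form `(x,y) ↦ ⟨x, T^a y⟩` on
`V̄^{-a}` is a nondegenerate symplectic form. -/
def InE2Star (Q : QuadraticForm k V) (W : ℤ → Submodule k V) (T : Module.End k V) : Prop :=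
  InE2 Q W T ∧
  (∀ n : ℕ, Set.InjOn (fun x => Q ((T ^ n) x))
      {x : V | x ∈ W (-(2 * n) : ℤ) ∧
        ∀ y ∈ W (-(2 * n) : ℤ), QuadraticMap.polar Q ((T ^ n) x) ((T ^ n) y) = 0}) ∧
  (∀ n : ℕ,
    (∀ x ∈ W (-(2 * n + 1) : ℤ),
        QuadraticMap.polar Q x ((T ^ (2 * n + 1)) x) = 0) ∧
    (∀ x ∈ W (-(2 * n + 1) : ℤ),
        (∀ y ∈ W (-(2 * n + 1) : ℤ), QuadraticMap.polar Q x ((T ^ (2 * n + 1)) y) = 0) →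
        x = 0))

namespace LinearMap.BilinForm

open Module Submodule

variable {K M : Type*} [Field K] [AddCommGroup M] [Module K M] {B : LinearMap.BilinForm K M}

lemma IsAlt.coeffs_eq_zero_of_apply_eq_zero (hB : B.IsAlt) {x y : M} (hxy : B x y ≠ 0)
    {a b : K} (hx : B (a • x + b • y) x = 0) (hy : B (a • x + b • y) y = 0) :
    a = 0 ∧ b = 0 := by
  have hyx : B y x ≠ 0 := fun h ↦ hxy (hB.isRefl y x h)
  simp only [map_add, map_smul, LinearMap.add_apply, LinearMap.smul_apply, smul_eq_mul,
    hB.self_eq_zero, mul_zero, add_zero, zero_add] at hx hy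
  exact ⟨(mul_eq_zero.mp hy).resolve_right hxy, (mul_eq_zero.mp hx).resolve_right hyx⟩

lemma IsAlt.linearIndependent_pair (hB : B.IsAlt) {x y : M} (hxy : B x y ≠ 0) :
    LinearIndependent K ![x, y] :=
  LinearIndependent.pair_iff.mpr fun a b h ↦
    hB.coeffs_eq_zero_of_apply_eq_zero hxy (by simp [h]) (by simp [h])

lemma IsAlt.disjoint_span_pair_orthogonal (hB : B.IsAlt) {x y : M} (hxy : B x y ≠ 0) :
    Disjoint (span K {x, y}) (B.orthogonal (span K {x, y})) := by
  rw [disjoint_iff_inf_le]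
  rintro z ⟨hz, hzo⟩
  obtain ⟨a, b, rfl⟩ := mem_span_pair.mp hz
  have hzo' : ∀ w ∈ span K {x, y}, B (a • x + b • y) w = 0 := fun w hw ↦
    hB.isRefl _ _ (hzo w hw)
  obtain ⟨rfl, rfl⟩ := hB.coeffs_eq_zero_of_apply_eq_zero hxy
    (hzo' x (subset_span (by simp))) (hzo' y (subset_span (by simp)))
  simp

theorem IsAlt.even_finrank [FiniteDimensional K M] (hB : B.IsAlt) (hnd : B.Nondegenerate) :
    Even (finrank K M) := by
  induction hn : finrank K M using Nat.strong_induction_on generalizing M B with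
  | _ n ih =>
  rcases Nat.eq_zero_or_pos n with rfl | hpos
  · exact ⟨0, rfl⟩
  have : Nontrivial M := Module.nontrivial_of_finrank_pos (hn ▸ hpos)
  obtain ⟨x, hx⟩ := exists_ne (0 : M)
  obtain ⟨y, hxy⟩ : ∃ y, B x y ≠ 0 := by
    by_contra! h
    exact hx (hnd.1 x h)
  set U := span K {x, y}
  have hU : finrank K U = 2 := by
    have := finrank_span_eq_card (hB.linearIndependent_pair hxy)
    rwa [Matrix.range_cons_cons_empty, Fintype.card_fin] at this
  have hUO := hB.disjoint_span_pair_orthogonal hxy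
  have hO : finrank K (B.orthogonal U) = n - 2 := by
    rw [finrank_orthogonal hnd, hn, hU]
  have hOnd : (B.restrict (B.orthogonal U)).Nondegenerate := by
    refine B.nondegenerate_restrict_of_disjoint_orthogonal hB.isRefl ?_
    rw [orthogonal_orthogonal hnd hB.isRefl]
    exact hUO.symm
  have h2n : 2 ≤ n := hn ▸ hU ▸ U.finrank_le
  obtain ⟨m, hm⟩ := ih (n - 2) (by omega) (B := B.restrict (B.orthogonal U))
    (fun z ↦ hB z) hOnd hO
  exact ⟨m + 1, by omega⟩

end LinearMap.BilinForm

open Module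

section Finrank

variable [FiniteDimensional k V] {U U' : Submodule k V}

lemma finrank_le_finrank_of_separating (B : LinearMap.BilinForm k V)
    (hB : ∀ x ∈ U, (∀ y ∈ U', B x y = 0) → x = 0) : finrank k U ≤ finrank k U' := by
  let φ : U →ₗ[k] Dual k U' := B.compl₁₂ U.subtype U'.subtype
  have hφ : Function.Injective φ := by
    rw [← LinearMap.ker_eq_bot, eq_bot_iff]
    rintro ⟨x, hx⟩ hφx
    have := hB x hx fun y hy ↦ LinearMap.congr_fun (LinearMap.mem_ker.mp hφx) ⟨y, hy⟩
    simpa using this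
  calc finrank k U ≤ finrank k (Dual k U') := LinearMap.finrank_le_finrank_of_injective hφ
    _ = finrank k U' := Subspace.dual_finrank_eq

lemma finrank_le_finrank_of_mapsTo (T : Module.End k V) (hT : ∀ x ∈ U, T x ∈ U')
    (hker : ∀ x ∈ U, T x = 0 → x = 0) : finrank k U ≤ finrank k U' := by
  refine LinearMap.finrank_le_finrank_of_injective (f := T.restrict hT) ?_
  rw [← LinearMap.ker_eq_bot, eq_bot_iff]
  rintro ⟨x, hx⟩ hTx
  simpa using hker x hx (congrArg Subtype.val (LinearMap.mem_ker.mp hTx))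

end Finrank

variable {Q : QuadraticForm k V} {W : ℤ → Submodule k V}

lemma CompatibleGrading.mem_rad (hcomp : CompatibleGrading Q W) (hW : iSup W = ⊤) {a : ℤ}
    {x : V} (hx : x ∈ W a) (h : ∀ y ∈ W (-a), polar Q x y = 0) : x ∈ rad Q := by
  rintro z -
  have hz : z ∈ iSup W := hW ▸ Submodule.mem_top
  induction hz using Submodule.iSup_induction' with
  | mem b y hy =>
    by_cases hb : a + b = 0
    · exact h y (by rwa [show -a = b by omega])
    · exact hcomp.2 a b hb x hx y hy
  | zero => exact polar_zero_right Q x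
  | add u v _ _ hu hv => rw [polar_add_right, hu, hv, add_zero]

lemma CompatibleGrading.finrank_le_finrank_neg [FiniteDimensional k V]
    (hcomp : CompatibleGrading Q W) (hW : iSup W = ⊤) (hQ : QNondeg Q) (a : ℤ) :
    finrank k (W a) ≤ finrank k (W (-a)) := by
  rcases eq_or_ne a 0 with rfl | ha
  · rw [neg_zero]
  refine finrank_le_finrank_of_separating (polarBilin Q) fun x hx h ↦ ?_
  have hQx : Q x = Q 0 := by rw [hcomp.1 a ha x hx, map_zero]
  exact hQ (hcomp.mem_rad hW hx h) (rad Q).zero_mem hQx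

lemma CompatibleGrading.finrank_neg [FiniteDimensional k V]
    (hcomp : CompatibleGrading Q W) (hW : iSup W = ⊤) (hQ : QNondeg Q) (a : ℤ) :
    finrank k (W a) = finrank k (W (-a)) :=
  (hcomp.finrank_le_finrank_neg hW hQ a).antisymm <| by
    have h := hcomp.finrank_le_finrank_neg hW hQ (-a)
    rwa [neg_neg] at h

namespace InE2Star

variable {T : Module.End k V} (hT : InE2Star Q W T)
include hT

lemma apply_mem {a b : ℤ} (hab : a + 2 = b) {x : V} (hx : x ∈ W a) : T x ∈ W b :=
  hab ▸ hT.1.1 a x hx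

lemma polar_pow_succ_eq_zero_of_apply_eq_zero {x : V} (hx : T x = 0) (m : ℕ) (y : V) :
    polar Q x ((T ^ (m + 1)) y) = 0 := by
  rw [pow_succ', Module.End.mul_apply, eq_neg_of_add_eq_zero_right (hT.1.2.1 x _), hx,
    polar_zero_left, neg_zero]

lemma finrank_succ_le [FiniteDimensional k V] (n : ℕ) :
    finrank k (W (-(2 * (n + 1)) : ℤ)) ≤ finrank k (W (-(2 * n) : ℤ)) := by
  refine finrank_le_finrank_of_mapsTo T (fun x hx ↦ hT.apply_mem (by ring) hx) fun x hx hTx ↦ ?_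
  have hpow : (T ^ (n + 1)) x = 0 := by rw [pow_succ, Module.End.mul_apply, hTx, map_zero]
  have hdeg : W (-(2 * (n + 1)) : ℤ) = W (-(2 * (n + 1 : ℕ)) : ℤ) := by push_cast; rfl
  rw [hdeg] at hx
  exact hT.2.1 (n + 1) ⟨hx, fun y _ ↦ by rw [hpow, polar_zero_left]⟩
    ⟨zero_mem _, fun y _ ↦ by rw [map_zero, polar_zero_left]⟩ (by simp [hpow])

lemma finrank_odd_succ_le [FiniteDimensional k V] (n : ℕ) :
    finrank k (W (-(2 * n + 3) : ℤ)) ≤ finrank k (W (-(2 * n + 1) : ℤ)) := by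
  refine finrank_le_finrank_of_mapsTo T (fun x hx ↦ hT.apply_mem (by ring) hx) fun x hx hTx ↦ ?_
  have hdeg : W (-(2 * n + 3) : ℤ) = W (-(2 * (n + 1 : ℕ) + 1) : ℤ) := by push_cast; ring_nf
  rw [hdeg] at hx
  exact (hT.2.2 (n + 1)).2 x hx fun y _ ↦ hT.polar_pow_succ_eq_zero_of_apply_eq_zero hTx _ y

lemma even_finrank_neg_odd [FiniteDimensional k V] (n : ℕ) :
    Even (finrank k (W (-(2 * n + 1) : ℤ))) := by
  set U := W (-(2 * n + 1) : ℤ)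
  let B : LinearMap.BilinForm k U :=
    (polarBilin Q).compl₁₂ U.subtype ((T ^ (2 * n + 1)) ∘ₗ U.subtype)
  have hB : B.IsAlt := fun x ↦ (hT.2.2 n).1 x x.2
  refine hB.even_finrank ((hB.isRefl.nondegenerate_iff_separatingLeft).mpr fun x hx ↦ ?_)
  exact Subtype.ext ((hT.2.2 n).2 x x.2 fun y hy ↦ hx ⟨y, hy⟩)

end InE2Star

lemma Int.exists_nat_eq_or_eq_neg_of_odd {a : ℤ} (ha : Odd a) :
    ∃ n : ℕ, a = 2 * n + 1 ∨ a = -(2 * n + 1) := by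
  obtain ⟨m, rfl⟩ := ha
  rcases le_or_gt 0 m with hm | hm
  · exact ⟨m.toNat, Or.inl (by omega)⟩
  · exact ⟨(-m - 1).toNat, Or.inr (by omega)⟩

/-- for a nondegenerate quadratic form compatible with a grading,
`f_a = f_{-a}` for all `a`; and if `E²_*V̄ ≠ ∅` then `f_0 ≥ f_{-2} ≥ f_{-4} ≥ ⋯`,
`f_{-1} ≥ f_{-3} ≥ ⋯`, and `f_a` is even for every odd `a`. -/
theorem stmt6 [FiniteDimensional k V] (W : ℤ → Submodule k V)
    (hgr : DirectSum.IsInternal W) (Q : QuadraticForm k V) (hQ : QNondeg Q)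
    (hcomp : CompatibleGrading Q W) :
    (∀ a : ℤ, Module.finrank k (W a) = Module.finrank k (W (-a))) ∧
    ((∃ T : Module.End k V, InE2Star Q W T) →
      (∀ n : ℕ, Module.finrank k (W (-(2 * (n + 1)) : ℤ)) ≤
          Module.finrank k (W (-(2 * n) : ℤ))) ∧
      (∀ n : ℕ, Module.finrank k (W (-(2 * n + 3) : ℤ)) ≤
          Module.finrank k (W (-(2 * n + 1) : ℤ))) ∧
      (∀ a : ℤ, Odd a → Even (Module.finrank k (W a)))) := by
  have hW := hgr.submodule_iSup_eq_top
  refine ⟨hcomp.finrank_neg hW hQ, ?_⟩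
  rintro ⟨T, hT⟩
  refine ⟨hT.finrank_succ_le, hT.finrank_odd_succ_le, fun a ha ↦ ?_⟩
  obtain ⟨n, rfl | rfl⟩ := Int.exists_nat_eq_or_eq_neg_of_odd ha
  · rw [hcomp.finrank_neg hW hQ]
    exact hT.even_finrank_neg_odd n
  · exact hT.even_finrank_neg_odd n

end Graded
end

section
/- Let Q be a nondegenerate quadratic form on V and let X* = (X^{≥a})_{a∈ℤ} be a Q-filtration of V. Then there exists a direct sum decomposition V = ⊕_{a∈ℤ} X^a such that X^{≥a} = ⊕_{a' ≥ a} X^{a'} for all a, ⟨X^a, X^{a'}⟩ = 0 whenever a + a' ≠ 0, and Q|_{X^a} = 0 for every a ≠ 0. -/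
open QuadraticMap

variable {k V : Type*}

/-- A `Q`-filtration of `V`: a decreasing family of subspaces, equal to `V` for small
indices and to `0` for large indices, such that for every `a ≥ 1` the form `Q` vanishes
on `X^{≥a}` and `X^{≥1-a} = (X^{≥a})^⊥`. -/
def IsQFiltration [Field k] [AddCommGroup V] [Module k V] (Q : QuadraticForm k V)
    (X : ℤ → Submodule k V) : Prop :=
  (∀ a : ℤ, X (a + 1) ≤ X a) ∧ (∃ a : ℤ, X a = ⊤) ∧ (∃ a : ℤ, X a = ⊥) ∧
    ∀ a : ℤ, 1 ≤ a → (∀ x ∈ X a, Q x = 0) ∧ X (1 - a) = perp Q (X a : Set V)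


/-!
Induction on `dim V`. If `X^{≥1} = 0`, all of `V` sits in degree `0`. Otherwise let `m ≥ 1` be
the last index with `X^{≥m} ≠ 0` and pick `e ≠ 0` in it. Then `Q e = 0`, so nondegeneracy puts
`e` outside the radical and yields a partner `f` with `Q f = 0`, `⟨e, f⟩ = 1`. Now
`V = k e ⊕ k f ⊕ U` with `U = {e, f}^⊥`, each `X^{≥a}` splits along this decomposition (this
uses `X^{≥a} ⊆ X^{≥1-m} = (X^{≥m})^⊥` for `a > -m`), and the traces `X^{≥a} ∩ U` form a
`Q`-filtration of the smaller nondegenerate space `U`. A grading of `U`, together with `e` in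
degree `m` and `f` in degree `-m`, grades `V`.
-/

section Perp

variable [Field k] [AddCommGroup V] [Module k V] {Q : QuadraticForm k V}

theorem polar_eq_zero_of_mem_perp {S : Set V} {x y : V} (hx : x ∈ perp Q S) (hy : y ∈ S) :
    polar Q y x = 0 := by
  rw [polar_comm]
  exact hx y hy

theorem perp_bot : perp Q ((⊥ : Submodule k V) : Set V) = ⊤ :=
  eq_top_iff.mpr fun x _ y hy => by
    rw [(Submodule.mem_bot k).mp hy, polar_zero_right]

theorem span_le_perp_perp (S : Set V) : Submodule.span k S ≤ perp Q (perp Q S : Set V) :=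
  Submodule.span_le.mpr fun _ hs _ hy => polar_eq_zero_of_mem_perp hy hs

theorem polar_eq_zero_of_isotropic {Z : Submodule k V} (hZ : ∀ z ∈ Z, Q z = 0) {x y : V}
    (hx : x ∈ Z) (hy : y ∈ Z) : polar Q x y = 0 := by
  rw [polar, hZ _ (Z.add_mem hx hy), hZ x hx, hZ y hy, sub_zero, sub_zero]

theorem QNondeg.comp_subtype (hQ : QNondeg Q) {U : Submodule k V}
    (hU : U ⊔ perp Q (U : Set V) = ⊤) : QNondeg (Q.comp U.subtype) := by
  have mem_rad : ∀ u ∈ rad (Q.comp U.subtype), (u : V) ∈ rad Q := by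
    intro u hu y _
    obtain ⟨v, hv, w, hw, rfl⟩ := Submodule.mem_sup.mp (hU ▸ Submodule.mem_top : y ∈ U ⊔ _)
    have huv : polar Q u v = 0 := by
      simpa only [polar, comp_apply, Submodule.subtype_apply, Submodule.coe_add] using
        hu ⟨v, hv⟩ trivial
    rw [polar_add_right, huv, polar_eq_zero_of_mem_perp hw u.2, add_zero]
  intro u hu v hv huv
  exact Subtype.coe_injective (hQ (mem_rad u hu) (mem_rad v hv) huv)

end Perp

section Grading

variable [Field k] [AddCommGroup V] [Module k V]

/-- The paper's splitting `V = ⊕ₐ Xᵃ`, except that the pieces need not span `V`. -/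
structure IsQGrading (Q : QuadraticForm k V) (Y : ℤ → Submodule k V) : Prop where
  iSupIndep : iSupIndep Y
  polar_eq_zero : ∀ a b : ℤ, a + b ≠ 0 → ∀ x ∈ Y a, ∀ y ∈ Y b, polar Q x y = 0
  isotropic : ∀ a : ℤ, a ≠ 0 → ∀ x ∈ Y a, Q x = 0

def tailSup (Y : ℤ → Submodule k V) (a : ℤ) : Submodule k V :=
  ⨆ (a' : ℤ) (_ : a ≤ a'), Y a'

theorem tailSup_sup (Y₁ Y₂ : ℤ → Submodule k V) : tailSup (Y₁ ⊔ Y₂) = tailSup Y₁ ⊔ tailSup Y₂ := by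
  ext1 a
  simp only [tailSup, Pi.sup_apply, iSup_sup_eq]

theorem tailSup_map {W : Type*} [AddCommGroup W] [Module k W] (f : W →ₗ[k] V)
    (Y : ℤ → Submodule k W) (a : ℤ) :
    tailSup (fun a => (Y a).map f) a = (tailSup Y a).map f := by
  simp only [tailSup, Submodule.map_iSup]

def singleGrading (c : ℤ) (Z : Submodule k V) (a : ℤ) : Submodule k V :=
  if a = c then Z else ⊥

theorem singleGrading_le (c : ℤ) (Z : Submodule k V) (a : ℤ) : singleGrading c Z a ≤ Z := by
  unfold singleGrading
  split_ifs <;> simp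

theorem tailSup_singleGrading (c : ℤ) (Z : Submodule k V) (a : ℤ) :
    tailSup (singleGrading c Z) a = if a ≤ c then Z else ⊥ := by
  simp only [tailSup, singleGrading, iSup_ite, iSup_bot, sup_bot_eq]
  simp_rw [iSup_comm (ι := a ≤ _), iSup_iSup_eq_left]
  exact iSup_eq_if Z

variable {Q : QuadraticForm k V}

theorem isQGrading_singleGrading (c : ℤ) (Z : Submodule k V)
    (hZ : c ≠ 0 → ∀ z ∈ Z, Q z = 0) : IsQGrading Q (singleGrading c Z) where
  iSupIndep a := by
    by_cases ha : a = c
    · refine disjoint_bot_right.mono_right (iSup₂_le fun b hb => ?_)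
      simp [singleGrading, ha ▸ hb]
    · simp [singleGrading, ha]
  polar_eq_zero a b hab x hx y hy := by
    unfold singleGrading at hx hy
    split_ifs at hx hy with ha hb
    · exact polar_eq_zero_of_isotropic (hZ (by omega)) hx hy
    all_goals simp_all
  isotropic a ha x hx := by
    unfold singleGrading at hx
    split_ifs at hx with hac
    · exact hZ (hac ▸ ha) x hx
    · simp_all

theorem Submodule.disjoint_sup_sup {A B Z₁ Z₁' Z₂ Z₂' : Submodule k V} (hAB : Disjoint A B)
    (h₁ : Z₁ ≤ A) (h₁' : Z₁' ≤ A) (h₂ : Z₂ ≤ B) (h₂' : Z₂' ≤ B)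
    (hZ₁ : Disjoint Z₁ Z₁') (hZ₂ : Disjoint Z₂ Z₂') : Disjoint (Z₁ ⊔ Z₂) (Z₁' ⊔ Z₂') := by
  rw [Submodule.disjoint_def]
  rintro _ hx hx'
  obtain ⟨x₁, hx₁, x₂, hx₂, rfl⟩ := Submodule.mem_sup.mp hx
  obtain ⟨x₁', hx₁', x₂', hx₂', hxx'⟩ := Submodule.mem_sup.mp hx'
  have hdiff : x₁ - x₁' = x₂' - x₂ := by
    rw [sub_eq_sub_iff_add_eq_add, ← hxx']
    abel
  have h₁eq : x₁ = x₁' := sub_eq_zero.mp <| Submodule.disjoint_def.mp hAB _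
    (A.sub_mem (h₁ hx₁) (h₁' hx₁')) (hdiff ▸ B.sub_mem (h₂' hx₂') (h₂ hx₂))
  have h₂eq : x₂ = x₂' := by
    rw [h₁eq, sub_self, eq_comm, sub_eq_zero] at hdiff
    exact hdiff.symm
  rw [Submodule.disjoint_def.mp hZ₁ _ hx₁ (h₁eq ▸ hx₁'),
    Submodule.disjoint_def.mp hZ₂ _ hx₂ (h₂eq ▸ hx₂'), add_zero]

theorem IsQGrading.sup {Y₁ Y₂ : ℤ → Submodule k V} (h₁ : IsQGrading Q Y₁) (h₂ : IsQGrading Q Y₂)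
    (hcross : ∀ a b : ℤ, a + b ≠ 0 → ∀ x ∈ Y₁ a, ∀ y ∈ Y₂ b, polar Q x y = 0)
    (hdisj : Disjoint (⨆ a, Y₁ a) (⨆ a, Y₂ a)) : IsQGrading Q (Y₁ ⊔ Y₂) where
  iSupIndep a := by
    simp only [Pi.sup_apply, iSup_sup_eq]
    exact Submodule.disjoint_sup_sup hdisj (le_iSup Y₁ a) (iSup₂_le fun b _ => le_iSup Y₁ b)
      (le_iSup Y₂ a) (iSup₂_le fun b _ => le_iSup Y₂ b) (h₁.iSupIndep a) (h₂.iSupIndep a)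
  polar_eq_zero a b hab x hx y hy := by
    obtain ⟨x₁, hx₁, x₂, hx₂, rfl⟩ := Submodule.mem_sup.mp hx
    obtain ⟨y₁, hy₁, y₂, hy₂, rfl⟩ := Submodule.mem_sup.mp hy
    rw [polar_add_left, polar_add_right, polar_add_right, h₁.polar_eq_zero a b hab x₁ hx₁ y₁ hy₁,
      h₂.polar_eq_zero a b hab x₂ hx₂ y₂ hy₂, hcross a b hab x₁ hx₁ y₂ hy₂, polar_comm,
      hcross b a (by omega) y₁ hy₁ x₂ hx₂]
    simp
  isotropic a ha x hx := by
    obtain ⟨x₁, hx₁, x₂, hx₂, rfl⟩ := Submodule.mem_sup.mp hx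
    rw [QuadraticMap.map_add Q, h₁.isotropic a ha x₁ hx₁, h₂.isotropic a ha x₂ hx₂,
      hcross a a (by omega) x₁ hx₁ x₂ hx₂]
    simp

theorem IsQGrading.map {W : Type*} [AddCommGroup W] [Module k W] {f : W →ₗ[k] V}
    (hf : Function.Injective f) {Y : ℤ → Submodule k W} (h : IsQGrading (Q.comp f) Y) :
    IsQGrading Q (fun a => (Y a).map f) where
  iSupIndep := f.iSupIndep_map hf h.iSupIndep
  polar_eq_zero a b hab := by
    rintro _ ⟨x, hx, rfl⟩ _ ⟨y, hy, rfl⟩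
    simpa [polar] using h.polar_eq_zero a b hab x hx y hy
  isotropic a ha := by
    rintro _ ⟨x, hx, rfl⟩
    exact h.isotropic a ha x hx

end Grading

section HyperbolicPair

variable [Field k] [AddCommGroup V] [Module k V] {Q : QuadraticForm k V}

theorem QNondeg.exists_hyperbolic_partner (hQ : QNondeg Q) {e : V} (he : e ≠ 0) (hQe : Q e = 0) :
    ∃ f, Q f = 0 ∧ polar Q e f = 1 := by
  have : e ∉ rad Q := fun hrad => he (hQ hrad (rad Q).zero_mem (by rw [hQe, map_zero]))
  obtain ⟨y, -, hy⟩ : ∃ y ∈ Set.univ, polar Q e y ≠ 0 := by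
    simpa [rad, perp] using this
  obtain ⟨f, hef⟩ : ∃ f, polar Q e f = 1 :=
    ⟨(polar Q e y)⁻¹ • y, by rw [polar_smul_right, smul_eq_mul, inv_mul_cancel₀ hy]⟩
  -- subtracting `Q f • e` kills `Q f` because `Q e = 0` and `⟨e, f⟩ = 1`
  refine ⟨f - Q f • e, ?_, ?_⟩
  · rw [sub_eq_add_neg, QuadraticMap.map_add Q, QuadraticMap.map_neg, polar_neg_right,
      polar_smul_right, polar_comm, hef, QuadraticMap.map_smul, hQe]
    simp
  · rw [polar_sub_right, polar_smul_right, polar_self, hQe, hef]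
    simp

variable {e f : V}

theorem sub_smul_sub_smul_mem_perp_pair (he : Q e = 0) (hf : Q f = 0) (hef : polar Q e f = 1)
    (x : V) : x - polar Q x f • e - polar Q x e • f ∈ perp Q {e, f} := by
  have hfe : polar Q f e = 1 := by rw [polar_comm, hef]
  rintro y (rfl | rfl) <;>
    simp [polar_sub_left, polar_smul_left, polar_self, he, hf, hef, hfe]

theorem span_pair_sup_perp_eq_top (he : Q e = 0) (hf : Q f = 0) (hef : polar Q e f = 1) :
    Submodule.span k {e, f} ⊔ perp Q {e, f} = ⊤ := by
  refine eq_top_iff.mpr fun x _ => Submodule.mem_sup.mpr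
    ⟨polar Q x f • e + polar Q x e • f, ?_, _, sub_smul_sub_smul_mem_perp_pair he hf hef x, ?_⟩
  · exact Submodule.mem_span_pair.mpr ⟨_, _, rfl⟩
  · abel

theorem perp_pair_sup_perp_perp_eq_top (he : Q e = 0) (hf : Q f = 0) (hef : polar Q e f = 1) :
    perp Q {e, f} ⊔ perp Q (perp Q {e, f} : Set V) = ⊤ :=
  eq_top_iff.mpr <| calc
    ⊤ ≤ Submodule.span k {e, f} ⊔ perp Q {e, f} := (span_pair_sup_perp_eq_top he hf hef).ge
    _ ≤ perp Q (perp Q {e, f} : Set V) ⊔ perp Q {e, f} := sup_le_sup_right (span_le_perp_perp _) _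
    _ = perp Q {e, f} ⊔ perp Q (perp Q {e, f} : Set V) := sup_comm _ _

theorem perp_pair_ne_top (hef : polar Q e f = 1) : perp Q {e, f} ≠ ⊤ := fun htop => by
  have hf : f ∈ perp Q {e, f} := htop ▸ Submodule.mem_top
  exact one_ne_zero (hef ▸ polar_eq_zero_of_mem_perp hf (by simp))

theorem disjoint_span_pair_perp (he : Q e = 0) (hf : Q f = 0) (hef : polar Q e f = 1) :
    Disjoint (Submodule.span k {e, f}) (perp Q {e, f}) := by
  rw [Submodule.disjoint_def]
  rintro _ hx hperp
  obtain ⟨c, d, rfl⟩ := Submodule.mem_span_pair.mp hx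
  have hc := hperp f (by simp)
  have hd := hperp e (by simp)
  simp only [polar_add_left, polar_smul_left, polar_self, he, hf, hef, polar_comm Q f e] at hc hd
  simp_all

theorem isQGrading_pair (he : Q e = 0) (hf : Q f = 0) (hef : polar Q e f = 1) (m : ℤ) :
    IsQGrading Q (singleGrading m (k ∙ e) ⊔ singleGrading (-m) (k ∙ f)) := by
  have isotropic_span {v : V} (hv : Q v = 0) : ∀ x ∈ k ∙ v, Q x = 0 := by
    rintro _ hx
    obtain ⟨c, rfl⟩ := Submodule.mem_span_singleton.mp hx
    rw [QuadraticMap.map_smul, hv, smul_zero]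
  refine (isQGrading_singleGrading _ _ fun _ => isotropic_span he).sup
    (isQGrading_singleGrading _ _ fun _ => isotropic_span hf) ?_ ?_
  · intro a b hab x hx y hy
    unfold singleGrading at hx hy
    split_ifs at hx hy with ha hb
    · omega
    all_goals simp_all
  · rw [Submodule.disjoint_def]
    intro x hxe hxf
    obtain ⟨c, rfl⟩ := Submodule.mem_span_singleton.mp (iSup_le (singleGrading_le _ _) hxe)
    obtain ⟨d, hd⟩ := Submodule.mem_span_singleton.mp (iSup_le (singleGrading_le _ _) hxf)
    have hpolar := congrArg (polar Q · e) hd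
    simp only [polar_smul_left, polar_self, he, polar_comm Q f e, hef] at hpolar
    simp only [smul_eq_mul, mul_one, smul_zero, mul_zero] at hpolar
    rw [← hd, hpolar, zero_smul]

end HyperbolicPair

namespace IsQFiltration

variable [Field k] [AddCommGroup V] [Module k V] {Q : QuadraticForm k V} {X : ℤ → Submodule k V}

theorem antitone (hX : IsQFiltration Q X) : Antitone X := antitone_int_of_succ_le hX.1

theorem isotropic (hX : IsQFiltration Q X) {a : ℤ} (ha : 1 ≤ a) : ∀ x ∈ X a, Q x = 0 :=
  (hX.2.2.2 a ha).1

theorem eq_perp (hX : IsQFiltration Q X) {a : ℤ} (ha : 1 ≤ a) : X (1 - a) = perp Q (X a : Set V) :=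
  (hX.2.2.2 a ha).2

theorem exists_last (hX : IsQFiltration Q X) (h1 : X 1 ≠ ⊥) :
    ∃ m, 1 ≤ m ∧ X m ≠ ⊥ ∧ X (m + 1) = ⊥ := by
  obtain ⟨a₀, ha₀⟩ := hX.2.2.1
  obtain ⟨m, hm, hmax⟩ := Int.exists_greatest_of_bdd (P := fun a => X a ≠ ⊥)
    ⟨a₀, fun a ha => not_lt.mp fun hlt => ha (le_bot_iff.mp (ha₀ ▸ hX.antitone hlt.le))⟩ ⟨1, h1⟩
  exact ⟨m, hmax 1 h1, hm, not_not.mp fun h => by linarith [hmax _ h]⟩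

theorem eq_top_of_le_neg (hX : IsQFiltration Q X) {m : ℤ} (hm0 : 0 ≤ m) (hm : X (m + 1) = ⊥)
    {a : ℤ} (ha : a ≤ -m) : X a = ⊤ := by
  have htop : X (-m) = ⊤ := by
    rw [show -m = 1 - (m + 1) by ring, hX.eq_perp (by omega), hm, perp_bot]
  exact top_unique (htop ▸ hX.antitone ha)

theorem eq_tailSup_singleGrading_zero (hX : IsQFiltration Q X) (h1 : X 1 = ⊥) :
    X = tailSup (singleGrading 0 ⊤) := by
  ext1 a
  rw [tailSup_singleGrading]
  split_ifs with ha
  · exact hX.eq_top_of_le_neg le_rfl (by simpa using h1) (by simpa using ha)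
  · exact le_bot_iff.mp (h1 ▸ hX.antitone (by omega))

theorem comap_subtype (hX : IsQFiltration Q X) {U : Submodule k V}
    (hU : ∀ a, X a ≤ perp Q (U : Set V) ⊔ (X a ⊓ U)) :
    IsQFiltration (Q.comp U.subtype) fun a => (X a).comap U.subtype := by
  obtain ⟨a₀, ha₀⟩ := hX.2.1
  obtain ⟨a₁, ha₁⟩ := hX.2.2.1
  refine ⟨fun a => Submodule.comap_mono (hX.1 a), ⟨a₀, by simp [ha₀]⟩, ⟨a₁, by simp [ha₁]⟩,
    fun a ha => ⟨fun u hu => hX.isotropic ha u hu, ?_⟩⟩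
  ext u
  simp only [Submodule.mem_comap, Submodule.subtype_apply, hX.eq_perp ha]
  refine ⟨fun hu v hv => hu v hv, fun hu y hy => ?_⟩
  obtain ⟨w, hw, v, hv, rfl⟩ := Submodule.mem_sup.mp (hU a hy)
  have huv : polar Q u v = 0 := hu ⟨v, hv.2⟩ hv.1
  rw [polar_add_right, polar_eq_zero_of_mem_perp hw u.2, huv, add_zero]

theorem eq_tailSup_pair_sup_inf_perp (hX : IsQFiltration Q X) {m : ℤ} (hm1 : 1 ≤ m)
    (hm : X (m + 1) = ⊥) {e f : V} (heX : e ∈ X m) (hf : Q f = 0) (hef : polar Q e f = 1) :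
    X = tailSup (singleGrading m (k ∙ e) ⊔ singleGrading (-m) (k ∙ f)) ⊔
      fun a => X a ⊓ perp Q {e, f} := by
  have he := hX.isotropic hm1 e heX
  ext1 a
  simp only [Pi.sup_apply, tailSup_sup, tailSup_singleGrading]
  rcases lt_or_ge m a with hma | ham
  · have hXa : X a = ⊥ := le_bot_iff.mp (hm ▸ hX.antitone (by omega))
    simp [hXa, hma.not_ge, show ¬a ≤ -m by omega]
  rcases le_or_gt a (-m) with ha | ha
  · rw [if_pos ham, if_pos ha, hX.eq_top_of_le_neg (by omega) hm ha, top_inf_eq,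
      ← Submodule.span_insert, span_pair_sup_perp_eq_top he hf hef]
  rw [if_pos ham, if_neg (by omega), sup_bot_eq]
  refine le_antisymm (fun y hy => ?_) (sup_le ?_ inf_le_left)
  · have hy' : y ∈ perp Q (X m : Set V) := hX.eq_perp hm1 ▸ hX.antitone (by omega) hy
    have hye : polar Q y e = 0 := hy' e heX
    have hyU := sub_smul_sub_smul_mem_perp_pair he hf hef y
    rw [hye, zero_smul, sub_zero] at hyU
    have hyX : y - polar Q y f • e ∈ X a :=
      (X a).sub_mem hy ((X a).smul_mem _ (hX.antitone ham heX))
    exact Submodule.mem_sup.mpr ⟨_, Submodule.smul_mem _ _ (Submodule.mem_span_singleton_self e),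
      _, ⟨hyX, hyU⟩, add_sub_cancel _ _⟩
  · exact (Submodule.span_singleton_le_iff_mem _ _).mpr (hX.antitone ham heX)

end IsQFiltration

theorem IsQFiltration.exists_isQGrading [Field k] [AddCommGroup V] [Module k V]
    [FiniteDimensional k V] {Q : QuadraticForm k V} (hQ : QNondeg Q) {X : ℤ → Submodule k V}
    (hX : IsQFiltration Q X) : ∃ Y, IsQGrading Q Y ∧ X = tailSup Y := by
  induction h : Module.finrank k V using Nat.strong_induction_on generalizing V with
  | _ n ih =>
  by_cases h1 : X 1 = ⊥
  · exact ⟨_, isQGrading_singleGrading 0 ⊤ (absurd rfl), hX.eq_tailSup_singleGrading_zero h1⟩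
  obtain ⟨m, hm1, hmX, hm⟩ := hX.exists_last h1
  obtain ⟨e, heX, he0⟩ := Submodule.exists_mem_ne_zero_of_ne_bot hmX
  have he := hX.isotropic hm1 e heX
  obtain ⟨f, hf, hef⟩ := hQ.exists_hyperbolic_partner he0 he
  have hXeq := hX.eq_tailSup_pair_sup_inf_perp hm1 hm heX hf hef
  set U := perp Q {e, f}
  have hHU : Submodule.span k {e, f} ≤ perp Q (U : Set V) := span_le_perp_perp _
  have hYH_le (a : ℤ) :
      (singleGrading m (k ∙ e) ⊔ singleGrading (-m) (k ∙ f)) a ≤ Submodule.span k {e, f} :=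
    sup_le ((singleGrading_le _ _ a).trans (Submodule.span_mono (by simp)))
      ((singleGrading_le _ _ a).trans (Submodule.span_mono (by simp)))
  have hUX (a : ℤ) : X a ≤ perp Q (U : Set V) ⊔ (X a ⊓ U) :=
    calc X a = _ ⊔ (X a ⊓ U) := congrFun hXeq a
      _ ≤ _ := sup_le_sup_right (iSup₂_le fun b _ => (hYH_le b).trans hHU) _
  obtain ⟨Y', hY', hXY'⟩ := ih _ (h ▸ Submodule.finrank_lt (perp_pair_ne_top hef))
    (hQ.comp_subtype (perp_pair_sup_perp_perp_eq_top he hf hef)) (hX.comap_subtype hUX) rfl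
  refine ⟨_, (isQGrading_pair he hf hef m).sup (hY'.map U.injective_subtype) ?_ ?_, ?_⟩
  · rintro a b - x hx _ ⟨y, -, rfl⟩
    exact hHU (hYH_le a hx) y y.2
  · exact (disjoint_span_pair_perp he hf hef).mono (iSup_le hYH_le)
      (iSup_le fun a => Submodule.map_subtype_le _ _)
  · conv_lhs => rw [hXeq]
    ext1 a
    simp only [Pi.sup_apply, tailSup_sup, tailSup_map, ← hXY']
    rw [Submodule.map_comap_subtype, inf_comm]

/-- every `Q`-filtration admits a compatible direct sum decomposition
`V = ⊕_a X^a` with `X^{≥a} = ⊕_{a' ≥ a} X^{a'}`, `⟨X^a, X^{a'}⟩ = 0` for `a + a' ≠ 0`,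
and `Q|_{X^a} = 0` for `a ≠ 0`. -/
theorem stmt8 [Field k] [AddCommGroup V] [Module k V] [FiniteDimensional k V]
    (Q : QuadraticForm k V) (hQ : QNondeg Q)
    (X : ℤ → Submodule k V) (hX : IsQFiltration Q X) :
    ∃ Y : ℤ → Submodule k V,
      DirectSum.IsInternal Y ∧
      (∀ a : ℤ, X a = ⨆ (a' : ℤ) (_ : a ≤ a'), Y a') ∧
      (∀ a a' : ℤ, a + a' ≠ 0 → ∀ x ∈ Y a, ∀ y ∈ Y a', QuadraticMap.polar Q x y = 0) ∧
      (∀ a : ℤ, a ≠ 0 → ∀ x ∈ Y a, Q x = 0) := by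
  obtain ⟨Y, hY, hXY⟩ := hX.exists_isQGrading hQ
  obtain ⟨a, ha⟩ := hX.2.1
  refine ⟨Y, ?_, fun a => congrFun hXY a, hY.polar_eq_zero, hY.isotropic⟩
  rw [DirectSum.isInternal_submodule_iff_iSupIndep_and_iSup_eq_top]
  exact ⟨hY.iSupIndep, top_unique (ha ▸ congrFun hXY a ▸ iSup₂_le fun a' _ => le_iSup Y a')⟩
end

section
/- Let Q be a nondegenerate quadratic form on V, let N ∈ 𝓜̃_Q with N ≠ 0, let e := e_N (so e ≥ 2), and let E be any subspace of V with V = E ⊕ ker N^{e−1}. Then the bilinear form on E defined by (x,y) := ⟨x, N^{e−1}y⟩ is nondegenerate, and it is (−1)^{e−1}-symmetric (symmetric if e is odd, skew-symmetric if e is even). -/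
open QuadraticMap

variable {k V : Type*}

/-- for `N ∈ 𝓜̃_Q`, `N ≠ 0`, `e = e_N`, and `E` a complement of
`ker N^{e-1}` in `V`, the bilinear form `(x,y) := ⟨x, N^{e-1} y⟩` on `E` is
nondegenerate and `(-1)^{e-1}`-symmetric. -/
theorem stmt11 [Field k] [AddCommGroup V] [Module k V] [FiniteDimensional k V]
    (Q : QuadraticForm k V) (hQ : QNondeg Q) (N : Module.End k V) (hN : N ∈ Mtilde Q)
    (hN0 : N ≠ 0) (e : ℕ) (he : N ^ e = 0) (he' : N ^ (e - 1) ≠ 0)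
    (E : Submodule k V) (hE : IsCompl E (LinearMap.ker (N ^ (e - 1)))) :
    (∀ x ∈ E, (∀ y ∈ E, QuadraticMap.polar Q x ((N ^ (e - 1)) y) = 0) → x = 0) ∧
    (∀ x ∈ E, ∀ y ∈ E,
      QuadraticMap.polar Q x ((N ^ (e - 1)) y) =
        (-1 : k) ^ (e - 1) * QuadraticMap.polar Q y ((N ^ (e - 1)) x)) := by
  classical
  obtain ⟨-, hNQ⟩ := hN
  -- e ≥ 2
  have he2 : 2 ≤ e := by
    by_contra h
    push_neg at h
    interval_cases e
    · exact hN0 (by calc N = N * (N ^ 0) := by rw [pow_zero, mul_one]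
        _ = N * 0 := by rw [he]
        _ = 0 := by rw [mul_zero])
    · exact hN0 (by rwa [pow_one] at he)
  -- (1 + N) preserves Q
  have h1 : ∀ x : V, Q (x + N x) = Q x := by
    intro x
    have h := hNQ x
    simp only [polar] at h
    linear_combination h
  -- key relation
  have key : ∀ x y : V, polar Q (N x) (N y) + polar Q x (N y) + polar Q (N x) y = 0 := by
    intro x y
    have h2 : polar Q (x + N x) (y + N y) = polar Q x y := by
      simp only [polar]
      rw [show x + N x + (y + N y) = (x + y) + N (x + y) by rw [map_add]; abel]
      rw [h1, h1, h1]
    rw [polar_add_left, polar_add_right, polar_add_right] at h2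
    linear_combination h2
  have rel : ∀ x y : V, polar Q (N x) y = - polar Q x (N y) - polar Q (N x) (N y) := by
    intro x y
    linear_combination key x y
  have pow_high : ∀ b, e ≤ b → (N ^ b : Module.End k V) = 0 := by
    intro b hb
    rw [show b = e + (b - e) by omega, pow_add, he, zero_mul]
  have happ : ∀ (a : ℕ) (x : V), (N ^ (a + 1) : Module.End k V) x = N ((N ^ a : Module.End k V) x) := by
    intro a x
    rw [pow_succ', Module.End.mul_apply]
  -- vanishing lemma: ⟨N^a x, N^b y⟩ = 0 for a + b ≥ e
  have vanish : ∀ (a b : ℕ) (x y : V), e ≤ a + b →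
      polar Q ((N ^ a : Module.End k V) x) ((N ^ b : Module.End k V) y) = 0 := by
    intro a
    induction a with
    | zero =>
      intro b x y hb
      rw [pow_high b (by omega), LinearMap.zero_apply, polar_zero_right]
    | succ a ih =>
      suffices h : ∀ (t b : ℕ) (x y : V), e ≤ a + 1 + b → e - b ≤ t →
          polar Q ((N ^ (a + 1) : Module.End k V) x) ((N ^ b : Module.End k V) y) = 0 by
        intro b x y hb
        exact h e b x y hb (by omega)
      intro t
      induction t with
      | zero =>
        intro b x y _ ht
        rw [pow_high b (by omega), LinearMap.zero_apply, polar_zero_right]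
      | succ t iht =>
        intro b x y hb ht
        by_cases hbe : e ≤ b
        · rw [pow_high b hbe, LinearMap.zero_apply, polar_zero_right]
        · rw [happ a x, rel ((N ^ a : Module.End k V) x) ((N ^ b : Module.End k V) y),
            ← happ b y, ← happ a x, ih (b + 1) x y (by omega),
            iht (b + 1) x y (by omega) (by omega)]
          ring
  -- alternation lemma
  have alt : ∀ (a b : ℕ) (x y : V), a + b = e - 1 →
      polar Q ((N ^ a : Module.End k V) x) ((N ^ b : Module.End k V) y) =
        (-1 : k) ^ a * polar Q x ((N ^ (e - 1) : Module.End k V) y) := by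
    intro a
    induction a with
    | zero =>
      intro b x y hb
      have : b = e - 1 := by omega
      subst this
      simp [pow_zero]
    | succ a ih =>
      intro b x y hb
      rw [happ a x, rel ((N ^ a : Module.End k V) x) ((N ^ b : Module.End k V) y),
        ← happ b y, ← happ a x, ih (b + 1) x y (by omega),
        vanish (a + 1) (b + 1) x y (by omega)]
      ring
  -- symmetry for all vectors
  have sym : ∀ x y : V, polar Q x ((N ^ (e - 1) : Module.End k V) y) =
      (-1 : k) ^ (e - 1) * polar Q y ((N ^ (e - 1) : Module.End k V) x) := by
    intro x y
    have h := alt (e - 1) 0 x y (by omega)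
    rw [pow_zero, Module.End.one_apply] at h
    have hc : polar Q ((N ^ (e - 1) : Module.End k V) x) y =
        polar Q y ((N ^ (e - 1) : Module.End k V) x) := polar_comm Q _ _
    have hsq : (-1 : k) ^ (e - 1) * (-1 : k) ^ (e - 1) = 1 := by
      rw [← mul_pow]; norm_num
    calc polar Q x ((N ^ (e - 1) : Module.End k V) y)
        = ((-1 : k) ^ (e - 1) * (-1 : k) ^ (e - 1)) * polar Q x ((N ^ (e - 1) : Module.End k V) y) := by
          rw [hsq, one_mul]
      _ = (-1 : k) ^ (e - 1) * polar Q y ((N ^ (e - 1) : Module.End k V) x) := by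
          rw [mul_assoc, ← h, hc]
  refine ⟨?_, fun x _ y _ => sym x y⟩
  -- nondegeneracy
  intro x hxE hx
  -- Step 1: ⟨x, N^{e-1} v⟩ = 0 for all v
  have hall : ∀ v : V, polar Q x ((N ^ (e - 1) : Module.End k V) v) = 0 := by
    intro v
    have hv : v ∈ E ⊔ LinearMap.ker (N ^ (e - 1)) := by
      rw [hE.sup_eq_top]; exact Submodule.mem_top
    obtain ⟨y, hy, w, hw, rfl⟩ := Submodule.mem_sup.mp hv
    rw [map_add, LinearMap.mem_ker.mp hw, add_zero]
    exact hx y hy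
  -- Step 2: z := N^{e-1} x ∈ rad Q
  set z : V := (N ^ (e - 1) : Module.End k V) x with hz
  have hzrad : z ∈ rad Q := by
    intro v _
    have h := sym v x
    rw [hall v, mul_zero] at h
    rw [polar_comm]
    exact h
  -- Step 3: Q z = 0
  have hQz : Q z = 0 := by
    have hzz : z = N ((N ^ (e - 2) : Module.End k V) x) := by
      rw [hz, show e - 1 = (e - 2) + 1 by omega, happ]
    rw [hzz, hNQ ((N ^ (e - 2) : Module.End k V) x), ← hzz]
    have := hzrad ((N ^ (e - 2) : Module.End k V) x) (Set.mem_univ _)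
    rw [polar_comm] at this
    rw [this, neg_zero]
  -- Step 4: z = 0
  have hz0 : z = 0 := hQ hzrad (Submodule.zero_mem _) (by rw [hQz, map_zero])
  -- Step 5: x = 0
  have hxker : x ∈ LinearMap.ker (N ^ (e - 1)) := LinearMap.mem_ker.mpr hz0
  exact Submodule.disjoint_def.mp hE.disjoint x hxE hxker
end

section
/- Assume char k = 2 and let Q be a nondegenerate quadratic form on V and N ∈ 𝓜̃_Q. Then for every odd integer i ≥ 1 and every x ∈ ker N^i one has ⟨x, N^{i−1}x⟩ = 0. -/
/-!
Put `g = 1 + N`. The identity `Q (N x) = -⟨x, N x⟩` says exactly that `g` preserves `Q`, hence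
`⟨·,·⟩`, and expanding `⟨g u, g v⟩ = ⟨u, v⟩` gives the twisted adjunction
`⟨N u, g v⟩ = -⟨u, N v⟩`.
As `g` is invertible and commutes with `N`, induction on `a` gives `⟨N^a u, N^b v⟩ = 0` whenever
`N^(a+b) v = 0`, and then `⟨N^j x, N^(k+1) x⟩ = -⟨N^(j+1) x, N^k x⟩` when `N^(j+k+2) x = 0`.
For `i = 2m + 1` this moves `N^m` across:
`⟨x, N^(2m) x⟩ = (-1)^m ⟨N^m x, N^m x⟩ = (-1)^m 2 Q (N^m x)`, which vanishes in
characteristic 2.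
-/

open QuadraticMap

variable {k V : Type*}

section TwistedAdjoint

variable {R M P : Type*} [CommRing R] [AddCommGroup M] [Module R M] [AddCommGroup P] [Module R P]
  {Q : QuadraticMap R M P} {N : Module.End R M}

theorem polar_add_apply_add_apply (hQN : ∀ x, Q (N x) = -polar Q x (N x)) (u v : M) :
    polar Q (u + N u) (v + N v) = polar Q u v := by
  have hQ : ∀ x, Q (x + N x) = Q x := fun x => by
    rw [QuadraticMap.map_add Q, hQN]
    abel
  rw [polar, add_add_add_comm, ← map_add, hQ, hQ, hQ, polar]

theorem polar_apply_add_apply (hQN : ∀ x, Q (N x) = -polar Q x (N x)) (u v : M) :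
    polar Q (N u) (v + N v) = -polar Q u (N v) := by
  have h := polar_add_apply_add_apply hQN u v
  rw [polar_add_left, polar_add_right, add_assoc, add_eq_left, add_comm] at h
  exact eq_neg_of_add_eq_zero_left h

theorem polar_pow_apply_pow_apply_eq_zero (hQN : ∀ x, Q (N x) = -polar Q x (N x))
    (hN : IsNilpotent N) (a b : ℕ) (u v : M) (h : (N ^ (a + b)) v = 0) :
    polar Q ((N ^ a) u) ((N ^ b) v) = 0 := by
  induction a generalizing b v with
  | zero => simp_all
  | succ a ih =>
    obtain ⟨g, hg⟩ := hN.isUnit_one_add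
    have hNg : Commute N ↑g⁻¹ := by
      refine Commute.units_inv_right ?_
      rw [hg]
      exact (Commute.one_right N).add_right (Commute.refl N)
    obtain ⟨w, rfl, hw⟩ : ∃ w, v = w + N w ∧ (N ^ (a + (b + 1))) w = 0 := by
      refine ⟨(↑g⁻¹ : Module.End R M) v, ?_, ?_⟩
      · change v = ((1 + N) * ↑g⁻¹ : Module.End R M) v
        rw [← hg, Units.mul_inv, Module.End.one_apply]
      · rw [show a + (b + 1) = a + 1 + b by omega, ← Module.End.mul_apply, (hNg.pow_left _).eq,
          Module.End.mul_apply, h, map_zero]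
    have hv : (N ^ b) (w + N w) = (N ^ b) w + N ((N ^ b) w) := by
      rw [map_add, ← Module.End.mul_apply (N ^ b) N, ← pow_succ, pow_succ',
        Module.End.mul_apply]
    rw [pow_succ', Module.End.mul_apply, hv, polar_apply_add_apply hQN, ← Module.End.mul_apply N,
      ← pow_succ', ih (b + 1) w hw, neg_zero]

theorem polar_pow_apply_pow_succ_apply (hQN : ∀ x, Q (N x) = -polar Q x (N x))
    (hN : IsNilpotent N) (j k : ℕ) (x : M) (h : (N ^ (j + k + 2)) x = 0) :
    polar Q ((N ^ j) x) ((N ^ (k + 1)) x) = -polar Q ((N ^ (j + 1)) x) ((N ^ k) x) := by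
  have hvanish := polar_pow_apply_pow_apply_eq_zero hQN hN (j + 1) (k + 1) x x
    (by rwa [show j + 1 + (k + 1) = j + k + 2 by omega])
  have hadj := polar_apply_add_apply hQN ((N ^ j) x) ((N ^ k) x)
  simp only [← Module.End.mul_apply, ← pow_succ'] at hadj
  rw [polar_add_right, hvanish, add_zero] at hadj
  rw [hadj, neg_neg]

theorem polar_pow_apply_pow_add_apply (hQN : ∀ x, Q (N x) = -polar Q x (N x))
    (hN : IsNilpotent N) (j k l : ℕ) (x : M) (h : (N ^ (j + k + l + 1)) x = 0) :
    polar Q ((N ^ j) x) ((N ^ (k + l)) x) =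
      (-1 : ℤ) ^ l • polar Q ((N ^ (j + l)) x) ((N ^ k) x) := by
  induction l generalizing j with
  | zero => simp
  | succ l ih =>
    rw [← add_assoc, polar_pow_apply_pow_succ_apply hQN hN j (k + l) x
        (by rwa [show j + (k + l) + 2 = j + k + (l + 1) + 1 by omega]),
      ih (j + 1) (by rwa [show j + 1 + k + l + 1 = j + k + (l + 1) + 1 by omega]),
      show j + 1 + l = j + (l + 1) by omega, pow_succ, mul_neg_one, neg_smul]

end TwistedAdjoint

theorem stmt13_general [Field k] [CharP k 2] [AddCommGroup V] [Module k V]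
    (Q : QuadraticForm k V) (N : Module.End k V) (hN : N ∈ Mtilde Q) :
    ∀ i : ℕ, Odd i → 1 ≤ i → ∀ x : V, (N ^ i) x = 0 →
      QuadraticMap.polar Q x ((N ^ (i - 1)) x) = 0 := by
  obtain ⟨hNil, hQN⟩ := hN
  rintro i ⟨m, rfl⟩ - x hx
  calc polar Q x ((N ^ (2 * m + 1 - 1)) x)
        = (-1 : ℤ) ^ m • polar Q ((N ^ m) x) ((N ^ m) x) := by
          simpa [show 2 * m + 1 - 1 = m + m by omega] using
            polar_pow_apply_pow_add_apply hQN hNil 0 m m x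
              (by rwa [show 0 + m + m + 1 = 2 * m + 1 by omega])
    _ = 0 := by rw [polar_self, CharTwo.two_nsmul, smul_zero]

/-- in characteristic 2, for `N ∈ 𝓜̃_Q`, every odd `i ≥ 1` and every
`x ∈ ker N^i`, one has `⟨x, N^{i-1} x⟩ = 0`. -/
theorem stmt13 [Field k] [CharP k 2] [AddCommGroup V] [Module k V] [FiniteDimensional k V]
    (Q : QuadraticForm k V) (hQ : QNondeg Q) (N : Module.End k V) (hN : N ∈ Mtilde Q) :
    ∀ i : ℕ, Odd i → 1 ≤ i → ∀ x : V, (N ^ i) x = 0 →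
      QuadraticMap.polar Q x ((N ^ (i - 1)) x) = 0 :=
  stmt13_general Q N hN
end

section
/- Let k be a finite field or an algebraically closed field of characteristic 2, Q a nondegenerate quadratic form on V, and N ∈ 𝓜_Q with N ≠ 0; let L := L_N. Then L ⊆ L^⊥ and Q vanishes identically on L. -/
open QuadraticMap

variable {k V : Type*}

open scoped Classical in
/-- The subspace `L_N ⊆ V` (as a set) attached to `N ≠ 0` with `e = e_N`, where
`λ(x) = ⟨x, N^{e-1}x⟩`: `L_N = N^{e-1}V` if `λ = 0`; `L_N = (ker λ)^⊥` if `λ ≠ 0` and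
`R = 0`; `L_N = {x ∈ (ker λ)^⊥ : Q(x) = 0}` if `λ ≠ 0` and `R ≠ 0`. -/
noncomputable def LsetN [Field k] [AddCommGroup V] [Module k V] (Q : QuadraticForm k V)
    (N : Module.End k V) (e : ℕ) : Set V :=
  if ∀ x : V, QuadraticMap.polar Q x ((N ^ (e - 1)) x) = 0 then
    Set.range fun x : V => (N ^ (e - 1)) x
  else if rad Q = ⊥ then
    (perp Q {x : V | QuadraticMap.polar Q x ((N ^ (e - 1)) x) = 0} : Set V)
  else
    {x : V | x ∈ perp Q {x : V | QuadraticMap.polar Q x ((N ^ (e - 1)) x) = 0} ∧ Q x = 0}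

/-!
In characteristic 2 the polar form `B` of `Q` is alternating, and since `1 + N` is an isometry of
`Q`, `B (N^a x) (N^b y) = 0` whenever `a + b ≥ e` and `N^(e-1)` is `B`-self-adjoint. Hence
`λ x = B x (N^(e-1) x)` satisfies `λ (u + c z) = λ u + c² λ z`; over a perfect field this makes
`ker λ + k z = V` for any `z ∉ ker λ`, and then `(ker λ)^⊥` is totally isotropic.

If `λ = 0`, `L = N^(e-1) V` is isotropic and `Q (N^(e-1) x) = B (N^(e-2) x) (N^(e-1) x)` vanishes
(for `e = 2` it is `λ x`). If `R = 0`, then `(ker λ)^⊥ ⊆ (ker N^(e-1))^⊥ = N^(e-1) V`, which settles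
`e ≥ 3`. For `e = 2`, a vector `N w ∈ (ker λ)^⊥` with `Q (N w) = λ w ≠ 0` would make `λ` the square
of a linear form `B v`; then `N' = N + B v (·) • v` has `B (N' ·) ·` alternating and
`ker N' = ker N ⊕ k w`. Alternating forms have even rank, so `rank N` would be odd, whereas `dim V`
and `dim ker N` are both even.
-/

open Module LinearMap

namespace LinearMap.BilinForm

variable [Field k] [AddCommGroup V] [Module k V] {β : LinearMap.BilinForm k V}

lemma exists_apply_eq_one_of_ne_zero (hβ : β ≠ 0) : ∃ x y, β x y = 1 := by
  obtain ⟨x, y, hxy⟩ : ∃ x y, β x y ≠ 0 := by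
    by_contra! h
    exact hβ (LinearMap.ext₂ h)
  exact ⟨(β x y)⁻¹ • x, y, by simp [hxy]⟩

lemma IsAlt.surjective_prod_of_apply_eq_one (hβ : β.IsAlt) {x y : V} (hxy : β x y = 1) :
    Function.Surjective ((β x).prod (β y)) := by
  rintro ⟨a, b⟩
  refine ⟨a • y - b • x, ?_⟩
  simp [hxy, ← hβ.neg_eq x y, hβ.self_eq_zero]

lemma IsAlt.codisjoint_ker_inf_span_pair (hβ : β.IsAlt) {x y : V} (hxy : β x y = 1) :
    Codisjoint (ker (β x) ⊓ ker (β y)) (Submodule.span k {x, y}) := by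
  rw [codisjoint_iff, eq_top_iff]
  intro u _
  have hyx : β y x = -1 := by rw [← hβ.neg_eq, hxy]
  have hsplit : u = (u - (β x u) • y + (β y u) • x) + ((β x u) • y - (β y u) • x) := by abel
  rw [hsplit]
  refine Submodule.add_mem_sup ?_ ?_
  · simp [hxy, hyx, hβ.self_eq_zero]
  · exact Submodule.sub_mem _ (Submodule.smul_mem _ _ (Submodule.subset_span (by simp)))
      (Submodule.smul_mem _ _ (Submodule.subset_span (by simp)))

lemma IsAlt.apply_eq_zero_of_mem_ker_inf (hβ : β.IsAlt) {x y : V} :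
    ∀ a ∈ ker (β x) ⊓ ker (β y), ∀ b ∈ Submodule.span k {x, y}, β a b = 0 := by
  intro a ha b hb
  obtain ⟨hax, hay⟩ := Submodule.mem_inf.mp ha
  obtain ⟨s, t, rfl⟩ := Submodule.mem_span_pair.mp hb
  rw [mem_ker] at hax hay
  rw [map_add, map_smul, map_smul, ← hβ.neg_eq x a, ← hβ.neg_eq y a, hax, hay]
  simp

variable [FiniteDimensional k V]

lemma IsAlt.finrank_ker_inf_add_two (hβ : β.IsAlt) {x y : V} (hxy : β x y = 1) :
    finrank k (ker (β x) ⊓ ker (β y) : Submodule k V) + 2 = finrank k V := by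
  have h := finrank_range_add_finrank_ker ((β x).prod (β y))
  rw [range_eq_top.mpr (hβ.surjective_prod_of_apply_eq_one hxy), finrank_top, finrank_prod,
    finrank_self, ker_prod] at h
  omega

theorem IsAlt.even_finrank_range (hβ : β.IsAlt) : Even (finrank k (range β)) := by
  induction hW : finrank k V using Nat.strong_induction_on generalizing V with
  | _ n ih =>
    by_cases hβ0 : β = 0
    · rw [hβ0, range_zero, finrank_bot]
      exact ⟨0, rfl⟩
    obtain ⟨x, y, hxy⟩ := exists_apply_eq_one_of_ne_zero hβ0
    set P : Submodule k V := ker (β x) ⊓ ker (β y)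
    have hP : finrank k P + 2 = finrank k V := hβ.finrank_ker_inf_add_two hxy
    have hrestrict : (β.restrict P).IsAlt := fun u => hβ.self_eq_zero u
    have hker : finrank k (ker (β.restrict P)) = finrank k (ker β) := by
      rw [ker_restrict_eq_of_codisjoint (hβ.codisjoint_ker_inf_span_pair hxy)
        hβ.apply_eq_zero_of_mem_ker_inf]
      refine (Submodule.comapSubtypeEquivOfLe fun u hu => ?_).finrank_eq
      have hu : β u = 0 := hu
      refine Submodule.mem_inf.mpr ⟨?_, ?_⟩ <;>
        rw [mem_ker, ← hβ.neg_eq, hu, LinearMap.zero_apply, neg_zero]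
    have hrank := finrank_range_add_finrank_ker β
    have hrank' := finrank_range_add_finrank_ker (β.restrict P)
    obtain ⟨m, hm⟩ := ih (finrank k P) (by omega) hrestrict rfl
    exact ⟨m + 1, by omega⟩

end LinearMap.BilinForm

lemma Module.End.pow_succ_apply' {R : Type*} [Semiring R] [AddCommMonoid V] [Module R V]
    (N : Module.End R V) (n : ℕ) (x : V) : (N ^ (n + 1)) x = N ((N ^ n) x) := by
  rw [pow_succ', Module.End.mul_apply]

namespace QuadraticMap

section Isometry

variable {R : Type*} [CommRing R] [AddCommGroup V] [Module R V] {Q : QuadraticForm R V}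
  {N : Module.End R V} {e : ℕ}

lemma polar_apply_apply_eq_neg (hN : ∀ x, Q (N x) = -polar Q x (N x)) (x y : V) :
    polar Q (N x) (N y) = -(polar Q (N x) y + polar Q x (N y)) := by
  have h : Q (N x + N y) = -polar Q (x + y) (N x + N y) := by rw [← map_add, hN]
  change Q (N x + N y) - Q (N x) - Q (N y) = _
  rw [h, hN x, hN y, polar_add_left, polar_add_right, polar_add_right, polar_comm Q y (N x)]
  ring

lemma polar_pow_apply_pow_apply_eq_zero (hN : ∀ x, Q (N x) = -polar Q x (N x)) (he : N ^ e = 0)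
    {a b : ℕ} (hab : e ≤ a + b) (x y : V) : polar Q ((N ^ a) x) ((N ^ b) y) = 0 := by
  induction hd : e - a generalizing a b with
  | zero =>
    rw [show a = (a - e) + e by omega, pow_add, he, mul_zero, LinearMap.zero_apply, polar_zero_left]
  | succ d ih =>
    obtain ⟨b, rfl⟩ : ∃ b', b = b' + 1 := ⟨b - 1, by omega⟩
    have h := polar_apply_apply_eq_neg hN ((N ^ a) x) ((N ^ b) y)
    rw [← End.pow_succ_apply', ← End.pow_succ_apply', ih (by omega) (by omega),
      ih (a := a + 1) (b := b) (by omega) (by omega), zero_add] at h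
    exact neg_eq_zero.mp h.symm

lemma polar_pow_add_apply (hN : ∀ x, Q (N x) = -polar Q x (N x)) (he : N ^ e = 0) {a b : ℕ}
    (hab : e ≤ a + b + 1) (x y : V) :
    polar Q ((N ^ (a + b)) x) y = (-1) ^ b * polar Q ((N ^ a) x) ((N ^ b) y) := by
  induction b generalizing a with
  | zero => simp
  | succ b ih =>
    have h := polar_apply_apply_eq_neg hN ((N ^ a) x) ((N ^ b) y)
    rw [← End.pow_succ_apply', ← End.pow_succ_apply',
      polar_pow_apply_pow_apply_eq_zero hN he (by omega)] at h
    rw [show a + (b + 1) = a + 1 + b by omega, ih (by omega), pow_succ (-1 : R)]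
    linear_combination (-1) ^ b * h

lemma apply_pow_pred_eq_zero (hN : ∀ x, Q (N x) = -polar Q x (N x)) (he : N ^ e = 0)
    (he3 : 3 ≤ e) (w : V) : Q ((N ^ (e - 1)) w) = 0 := by
  rw [show e - 1 = e - 2 + 1 by omega, End.pow_succ_apply', hN, ← End.pow_succ_apply',
    polar_pow_apply_pow_apply_eq_zero hN he (by omega), neg_zero]

lemma polar_pow_pred_apply_comm [CharP R 2] (hN : ∀ x, Q (N x) = -polar Q x (N x))
    (he : N ^ e = 0) (x y : V) : polar Q ((N ^ (e - 1)) x) y = polar Q x ((N ^ (e - 1)) y) := by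
  simpa [CharTwo.neg_eq] using polar_pow_add_apply hN he (a := 0) (b := e - 1) (by omega) x y

lemma apply_pow_pred_eq_zero_of_forall_polar [CharP R 2] (hN : ∀ x, Q (N x) = -polar Q x (N x))
    (he : N ^ e = 0) (he2 : 2 ≤ e) (hlam : ∀ x, polar Q x ((N ^ (e - 1)) x) = 0) (w : V) :
    Q ((N ^ (e - 1)) w) = 0 := by
  obtain rfl | he3 := he2.eq_or_lt
  · simpa [hN, CharTwo.neg_eq] using hlam w
  · exact apply_pow_pred_eq_zero hN he he3 w

end Isometry

section SelfAdjoint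

variable {R : Type*} [CommRing R] [CharP R 2] [AddCommGroup V] [Module R V]
  {Q : QuadraticForm R V} {M : Module.End R V}

lemma polar_add_smul_apply_add_smul (hM : ∀ x y, polar Q (M x) y = polar Q x (M y))
    (u z : V) (c : R) :
    polar Q (u + c • z) (M (u + c • z)) = polar Q u (M u) + c ^ 2 * polar Q z (M z) := by
  have hcross : polar Q u (M z) = polar Q z (M u) := by rw [polar_comm, hM]
  rw [map_add, map_smul, polar_add_left, polar_add_right, polar_add_right, polar_smul_left,
    polar_smul_left, polar_smul_right, polar_smul_right, smul_eq_mul, smul_eq_mul, smul_eq_mul]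
  linear_combination c * hcross + c * polar Q z (M u) * CharTwo.two_eq_zero (R := R)

end SelfAdjoint

section CharTwo

variable [Field k] [CharP k 2] [AddCommGroup V] [Module k V] {Q : QuadraticForm k V}
  {M : Module.End k V}

lemma polar_self_eq_zero (x : V) : polar Q x x = 0 := by
  rw [polar_self, CharTwo.two_nsmul]

lemma polar_eq_zero_of_mem_perp {S : Set V} {z : V} (hS : ∀ u, ∃ c : k, u + c • z ∈ S)
    {x y : V} (hx : x ∈ perp Q S) (hy : y ∈ perp Q S) : polar Q x y = 0 := by
  have hcoeff : ∀ {x}, x ∈ perp Q S → ∀ u c, u + c • z ∈ S → polar Q x u = c * polar Q x z :=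
    fun hx u c hc => by
      have h := hx _ hc
      rwa [polar_add_right, polar_smul_right, smul_eq_mul, CharTwo.add_eq_zero] at h
  obtain ⟨c, hc⟩ := hS y
  have hyz : c * polar Q y z = 0 := by rw [← hcoeff hy y c hc, polar_self_eq_zero]
  rcases mul_eq_zero.mp hyz with hc0 | hyz
  · rw [hcoeff hx y c hc, hc0, zero_mul]
  · obtain ⟨d, hd⟩ := hS x
    rw [polar_comm, hcoeff hy x d hd, hyz, mul_zero]

variable [PerfectRing k 2]

lemma exists_polar_add_smul_apply_eq_zero (hM : ∀ x y, polar Q (M x) y = polar Q x (M y))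
    {z : V} (hz : polar Q z (M z) ≠ 0) (u : V) :
    ∃ c : k, polar Q (u + c • z) (M (u + c • z)) = 0 := by
  obtain ⟨c, hc⟩ := surjective_frobenius k 2 (polar Q u (M u) / polar Q z (M z))
  refine ⟨c, ?_⟩
  rw [polar_add_smul_apply_add_smul hM, ← _root_.frobenius_def, hc, div_mul_cancel₀ _ hz,
    CharTwo.add_self_eq_zero]

lemma polar_apply_sq_eq_mul (hM : ∀ x y, polar Q (M x) y = polar Q x (M y)) {w : V}
    (hw : polar Q w (M w) ≠ 0) (hMw : M w ∈ perp Q {u | polar Q u (M u) = 0}) (u : V) :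
    polar Q (M w) u ^ 2 = polar Q w (M w) * polar Q u (M u) := by
  obtain ⟨c, hc⟩ := exists_polar_add_smul_apply_eq_zero hM hw u
  have hMwu : polar Q (M w) u = c * polar Q w (M w) := by
    have h := hMw _ hc
    rwa [polar_add_right, polar_smul_right, smul_eq_mul, polar_comm Q (M w) w,
      CharTwo.add_eq_zero] at h
  rw [polar_add_smul_apply_add_smul hM, CharTwo.add_eq_zero] at hc
  rw [hMwu, hc]
  ring

end CharTwo

section Nondegenerate

variable [Field k] [AddCommGroup V] [Module k V] {Q : QuadraticForm k V} {M : Module.End k V}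

lemma ker_polarBilin : ker (polarBilin Q) = rad Q := by
  ext x
  simp [rad, perp, LinearMap.ext_iff]

variable [FiniteDimensional k V]

lemma even_finrank_range_of_polar_apply_self_eq_zero (hQ : rad Q = ⊥)
    (hM : ∀ u, polar Q (M u) u = 0) : Even (finrank k (range M)) := by
  have halt : LinearMap.BilinForm.IsAlt ((polarBilin Q).comp M) := hM
  have hker : ker ((polarBilin Q).comp M) = ker M :=
    ker_comp_of_ker_eq_bot _ (ker_polarBilin.trans hQ)
  have h1 := finrank_range_add_finrank_ker ((polarBilin Q).comp M)
  have h2 := finrank_range_add_finrank_ker M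
  rw [hker] at h1
  convert halt.even_finrank_range using 1
  omega

lemma even_finrank_of_rad_eq_bot [CharP k 2] (hQ : rad Q = ⊥) : Even (finrank k V) := by
  have h := even_finrank_range_of_polar_apply_self_eq_zero (M := 1) hQ polar_self_eq_zero
  rwa [Module.End.one_eq_id, LinearMap.range_id, finrank_top] at h

lemma perp_ker_le_range (hQ : rad Q = ⊥) (hM : ∀ x y, polar Q (M x) y = polar Q x (M y)) :
    perp Q (ker M : Set V) ≤ range M := by
  set B : LinearMap.BilinForm k V := polarBilin Q
  have hB : B.Nondegenerate := LinearMap.BilinForm.nondegenerate_iff_ker_eq_bot.mpr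
    (ker_polarBilin.trans hQ)
  have hrefl : B.IsRefl := fun x y h => by rwa [polarBilin_apply_apply, polar_comm] at h
  have horth : B.orthogonal (range M) = ker M := by
    ext u
    simp only [LinearMap.BilinForm.mem_orthogonal_iff, mem_range, forall_exists_index,
      forall_apply_eq_imp_iff, B, polarBilin_apply_apply, hM]
    rw [mem_ker, ← Submodule.mem_bot k, ← hQ]
    exact ⟨fun h y _ => by rw [polar_comm]; exact h y,
      fun h y => by rw [polar_comm]; exact h y trivial⟩
  intro x hx
  rw [← LinearMap.BilinForm.orthogonal_orthogonal hB hrefl (range M), horth]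
  exact fun n hn => by rw [polarBilin_apply_apply, polar_comm]; exact hx n hn

end Nondegenerate

section Parity

variable [Field k] [CharP k 2] [AddCommGroup V] [Module k V] [FiniteDimensional k V]
  {Q : QuadraticForm k V} {M : Module.End k V}

lemma finrank_ker_add_smulRight {v w : V} (hMw : M w = v) (hvw : polar Q v w = 1)
    (hlam : ∀ u, polar Q u (M u) = polar Q v u ^ 2) :
    finrank k (ker (M + (polarBilin Q v).smulRight v)) = finrank k (ker M) + 1 := by
  have hM' : ∀ u, (M + (polarBilin Q v).smulRight v) u = M u + polar Q v u • v := fun _ => rfl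
  have hw0 : w ≠ 0 := by rintro rfl; simp at hvw
  have hw : w ∉ ker M := by
    rintro h
    rw [mem_ker, hMw] at h
    simp [h] at hvw
  have hker : ker (M + (polarBilin Q v).smulRight v) = ker M ⊔ k ∙ w := by
    refine le_antisymm (fun u hu => ?_) (sup_le (fun u hu => ?_) ?_)
    · have hu' : u + polar Q v u • w ∈ ker M := by
        rw [mem_ker, map_add, map_smul, hMw, ← hM']
        exact hu
      rw [show u = u + polar Q v u • w - polar Q v u • w by abel]
      exact Submodule.sub_mem _ (Submodule.mem_sup_left hu')
        (Submodule.mem_sup_right (Submodule.smul_mem _ _ (Submodule.mem_span_singleton_self w)))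
    · rw [mem_ker] at hu ⊢
      have hvu : polar Q v u = 0 := by
        rw [← pow_eq_zero_iff two_ne_zero, ← hlam, hu, polar_zero_right]
      rw [hM', hu, hvu, zero_smul, add_zero]
    · rw [Submodule.span_singleton_le_iff_mem, mem_ker, hM', hMw, hvw, one_smul,
        ← two_smul k v, CharTwo.two_eq_zero, zero_smul]
  have hdisj := ((Submodule.disjoint_span_singleton' hw0).mpr hw).eq_bot
  have h := Submodule.finrank_sup_add_finrank_inf_eq (ker M) (k ∙ w)
  rw [hdisj, finrank_bot, finrank_span_singleton hw0, ← hker] at h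
  omega

lemma odd_finrank_range_of_polar_sq (hQ : rad Q = ⊥) {v w : V} (hMw : M w = v)
    (hvw : polar Q v w = 1) (hlam : ∀ u, polar Q u (M u) = polar Q v u ^ 2) :
    Odd (finrank k (range M)) := by
  obtain ⟨m, hm⟩ := even_finrank_range_of_polar_apply_self_eq_zero
    (M := M + (polarBilin Q v).smulRight v) hQ fun u => by
      change polar Q (M u + polar Q v u • v) u = 0
      rw [polar_add_left, polar_smul_left, smul_eq_mul, polar_comm Q (M u), hlam,
        polar_comm Q v u, pow_two, CharTwo.add_self_eq_zero]
  have h1 := finrank_range_add_finrank_ker M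
  have h2 := finrank_range_add_finrank_ker (M + (polarBilin Q v).smulRight v)
  have h3 := finrank_ker_add_smulRight hMw hvw hlam
  exact ⟨m, by omega⟩

variable [PerfectRing k 2]

lemma odd_finrank_range_of_mem_perp (hQ : rad Q = ⊥)
    (hM : ∀ x y, polar Q (M x) y = polar Q x (M y)) {w : V} (hw : polar Q w (M w) ≠ 0)
    (hMw : M w ∈ perp Q {u | polar Q u (M u) = 0}) : Odd (finrank k (range M)) := by
  obtain ⟨s, hs⟩ := surjective_frobenius k 2 (polar Q w (M w))
  rw [_root_.frobenius_def] at hs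
  have hs0 : s ≠ 0 := by
    rintro rfl
    exact hw (by rw [← hs, zero_pow two_ne_zero])
  refine odd_finrank_range_of_polar_sq hQ (w := s⁻¹ • w) (map_smul M s⁻¹ w) ?_ fun u => ?_
  · rw [polar_smul_left, polar_smul_right, polar_comm Q (M w), ← hs, smul_eq_mul, smul_eq_mul]
    field_simp
  · rw [polar_smul_left, smul_eq_mul, mul_pow, polar_apply_sq_eq_mul hM hw hMw, ← hs]
    field_simp

lemma apply_eq_zero_of_mem_perp {N : Module.End k V} {e : ℕ} (hQ : rad Q = ⊥)
    (hN : ∀ x, Q (N x) = -polar Q x (N x)) (he : N ^ e = 0) (he2 : 2 ≤ e)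
    (hker : Even (finrank k (ker N))) {x : V}
    (hx : x ∈ perp Q {u | polar Q u ((N ^ (e - 1)) u) = 0}) : Q x = 0 := by
  have hM := polar_pow_pred_apply_comm hN he
  have hker_sub : (ker (N ^ (e - 1)) : Set V) ⊆ {u | polar Q u ((N ^ (e - 1)) u) = 0} :=
    fun u hu => by simp [mem_ker.mp hu]
  obtain ⟨w, rfl⟩ := perp_ker_le_range hQ hM fun y hy => hx y (hker_sub hy)
  obtain rfl | he3 := he2.eq_or_lt
  · simp only [Nat.reduceSub, pow_one] at hx hM ⊢
    by_contra hQw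
    have hw : polar Q w (N w) ≠ 0 := by simpa [hN, CharTwo.neg_eq] using hQw
    have hodd := odd_finrank_range_of_mem_perp hQ hM hw hx
    have hrank := finrank_range_add_finrank_ker N
    have hV := even_finrank_of_rad_eq_bot hQ
    rw [Nat.odd_iff] at hodd
    rw [Nat.even_iff] at hker hV
    omega
  · exact apply_pow_pred_eq_zero hN he he3 w

end Parity

end QuadraticMap

theorem stmt15_general [Field k] [CharP k 2] (hk : Finite k ∨ IsAlgClosed k)
    [AddCommGroup V] [Module k V] [FiniteDimensional k V]
    (Q : QuadraticForm k V) (N : Module.End k V) (hN : N ∈ Mtilde Q)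
    (hMQ : Even (Module.finrank k V) → Even (Module.finrank k (LinearMap.ker N)))
    (hN0 : N ≠ 0) (e : ℕ) (he : N ^ e = 0) (he' : N ^ (e - 1) ≠ 0) :
    LsetN Q N e ⊆ (perp Q (LsetN Q N e) : Set V) ∧ ∀ x ∈ LsetN Q N e, Q x = 0 := by
  have : PerfectField k := hk.elim (fun _ => inferInstance) (fun _ => inferInstance)
  obtain ⟨-, hN⟩ := hN
  have he2 : 2 ≤ e := by
    by_contra! h
    interval_cases e
    exacts [he' he, hN0 (by simpa using he)]
  by_cases hlam : ∀ x, polar Q x ((N ^ (e - 1)) x) = 0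
  · rw [LsetN, if_pos hlam]
    refine ⟨?_, ?_⟩
    · rintro _ ⟨a, rfl⟩ _ ⟨b, rfl⟩
      exact polar_pow_apply_pow_apply_eq_zero hN he (by omega) a b
    · rintro _ ⟨w, rfl⟩
      exact apply_pow_pred_eq_zero_of_forall_polar hN he he2 hlam w
  obtain ⟨z, hz⟩ := not_forall.mp hlam
  have hS := exists_polar_add_smul_apply_eq_zero (polar_pow_pred_apply_comm hN he) hz
  by_cases hR : rad Q = ⊥
  · rw [LsetN, if_neg hlam, if_pos hR]
    exact ⟨fun x hx y hy => polar_eq_zero_of_mem_perp hS hx hy, fun x hx =>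
      apply_eq_zero_of_mem_perp hR hN he he2 (hMQ (even_finrank_of_rad_eq_bot hR)) hx⟩
  · rw [LsetN, if_neg hlam, if_neg hR]
    exact ⟨fun x hx y hy => polar_eq_zero_of_mem_perp hS hx.1 hy.1, fun x hx => hx.2⟩

/-- in characteristic 2 (`k` finite or algebraically closed), for
`N ∈ 𝓜_Q`, `N ≠ 0`, `L = L_N` satisfies `L ⊆ L^⊥` and `Q|_L = 0`. -/
theorem stmt15 [Field k] [CharP k 2] (hk : Finite k ∨ IsAlgClosed k)
    [AddCommGroup V] [Module k V] [FiniteDimensional k V]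
    (Q : QuadraticForm k V) (hQ : QNondeg Q) (N : Module.End k V) (hN : N ∈ Mtilde Q)
    (hMQ : Even (Module.finrank k V) → Even (Module.finrank k (LinearMap.ker N)))
    (hN0 : N ≠ 0) (e : ℕ) (he : N ^ e = 0) (he' : N ^ (e - 1) ≠ 0) :
    LsetN Q N e ⊆ (perp Q (LsetN Q N e) : Set V) ∧ ∀ x ∈ LsetN Q N e, Q x = 0 :=
  stmt15_general hk Q N hN hMQ hN0 e he he'
end

section
/- Let k be a finite field or an algebraically closed field of characteristic 2, V of even dimension D, Q a nondegenerate quadratic form on V (so R = 0), and N ∈ 𝓜̃_Q. Then for every subspace S ⊆ V with dim S = D/2 on which Q vanishes identically, one has dim(S/(S ∩ (1+N)(S))) ≡ dim ker N (mod 2). -/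
open QuadraticMap

variable {k V : Type*}

/-!
In characteristic `2` the polar form of `Q` is alternating, so `dim V + dim R` is even; over a
perfect field `Q` is `2`-semilinear and injective on `R`, so `dim R ≤ 1`, whence `R = 0`.

In the doubled space `V × V` with the form `Q ⊕ (-Q)`, the graph `Γ` of `g = 1 + N`, the
diagonal `Δ` and `S × S` are Lagrangians, with `Γ ⊓ Δ ≅ ker N`, `Δ ⊓ (S × S) ≅ S` and
`Γ ⊓ (S × S) ≅ S ⊓ g⁻¹ S`. For any three Lagrangians `L, M, P` of a nondegenerate space of
dimension `2m` one has `dim (L ⊓ M) + dim (M ⊓ P) + dim (L ⊓ P) ≡ m (mod 2)`: moving `M` towards `P`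
through Lagrangians meeting in codimension one flips the parity of `dim (L ⊓ M)` at each step.
-/

open Module Submodule

namespace LinearMap.BilinForm

variable {K W : Type*} [Field K] [AddCommGroup W] [Module K W]

lemma IsAlt.isotropic_sup_span_singleton {B : LinearMap.BilinForm K W} (hB : B.IsAlt)
    {L : Submodule K W} (hL : ∀ x ∈ L, ∀ y ∈ L, B x y = 0) {v : W} (hv : v ∈ B.orthogonal L) :
    ∀ x ∈ L ⊔ K ∙ v, ∀ y ∈ L ⊔ K ∙ v, B x y = 0 := by
  have hvL : ∀ x ∈ L, B v x = 0 := fun x hx => hB.isRefl _ _ (hv x hx)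
  intro x hx y hy
  obtain ⟨x, hxL, _, hx', rfl⟩ := mem_sup.mp hx
  obtain ⟨y, hyL, _, hy', rfl⟩ := mem_sup.mp hy
  obtain ⟨a, rfl⟩ := mem_span_singleton.mp hx'
  obtain ⟨b, rfl⟩ := mem_span_singleton.mp hy'
  simp [hL x hxL y hyL, hv x hxL, hvL y hyL, hB v]

variable [FiniteDimensional K W]

/-- Any maximal isotropic subspace `L` satisfies `L = Lᗮ ⊇ ker B`, so that
`dim W + dim ker B = 2 dim L`. -/
theorem IsAlt.even_finrank_add_finrank_orthogonal_top {B : LinearMap.BilinForm K W}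
    (hB : B.IsAlt) : Even (finrank K W + finrank K (B.orthogonal ⊤)) := by
  obtain ⟨L, -, hL⟩ := exists_maximal_ge_of_wellFoundedGT
    (fun L : Submodule K W => ∀ x ∈ L, ∀ y ∈ L, B x y = 0) ⊥ (by simp)
  have hLL : B.orthogonal L = L := by
    refine le_antisymm (fun v hv => ?_) (fun x hx y hy => hL.prop y hy x hx)
    have := hL.le_of_ge (hB.isotropic_sup_span_singleton hL.prop hv) le_sup_left
    exact this (mem_sup_right (mem_span_singleton_self v))
  have hdim := finrank_add_finrank_orthogonal hB.isRefl L
  rw [hLL, inf_eq_right.mpr (hLL ▸ orthogonal_le le_top)] at hdim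
  exact ⟨finrank K L, by omega⟩

end LinearMap.BilinForm

section Radical

variable {k V : Type*} [Field k] [AddCommGroup V] [Module k V]

lemma perp_eq_orthogonal (Q : QuadraticForm k V) (S : Submodule k V) :
    perp Q S = LinearMap.BilinForm.orthogonal Q.polarBilin S := by
  ext x
  refine ⟨fun h y hy => ?_, fun h y hy => ?_⟩
  · rw [polarBilin_apply_apply, polar_comm]
    exact h y hy
  · rw [polar_comm]
    exact h y hy

lemma perp_le_perp (Q : QuadraticForm k V) {S T : Submodule k V} (h : S ≤ T) :
    perp Q T ≤ perp Q S :=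
  fun _ hx y hy => hx y (h hy)

lemma rad_eq_orthogonal_top_s17 (Q : QuadraticForm k V) :
    rad Q = LinearMap.BilinForm.orthogonal Q.polarBilin ⊤ := by
  rw [rad, ← perp_eq_orthogonal, top_coe]

lemma rad_prod {W : Type*} [AddCommGroup W] [Module k W] (Q₁ : QuadraticForm k V)
    (Q₂ : QuadraticForm k W) : rad (Q₁.prod Q₂) = (rad Q₁).prod (rad Q₂) := by
  ext ⟨x, y⟩
  simp only [rad, perp, Set.mem_univ, forall_const, mem_mk, AddSubmonoid.mem_mk,
    AddSubsemigroup.mem_mk, Set.mem_ofPred_eq, mem_prod, Prod.forall, polar_prod]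
  refine ⟨fun h => ⟨fun u => ?_, fun w => ?_⟩, fun h u w => by rw [h.1, h.2, add_zero]⟩
  · simpa using h u 0
  · simpa using h 0 w

lemma rad_neg (Q : QuadraticForm k V) : rad (-Q) = rad Q := by
  ext x
  simp only [rad, perp, Set.mem_univ, forall_const, mem_mk, AddSubmonoid.mem_mk,
    AddSubsemigroup.mem_mk, Set.mem_ofPred_eq, FunLike.coe_neg, polar_neg, neg_eq_zero]

lemma polarBilin_isAlt [CharP k 2] (Q : QuadraticForm k V) :
    LinearMap.BilinForm.IsAlt Q.polarBilin := by
  intro x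
  rw [polarBilin_apply_apply, polar_self, two_smul, CharTwo.add_self_eq_zero]

variable {Q : QuadraticForm k V}

lemma finrank_rad_le_one [ExpChar k 2] [PerfectRing k 2] (hQ : QNondeg Q) :
    finrank k (rad Q) ≤ 1 := by
  by_cases h : rad Q = ⊥
  · rw [h, finrank_bot]
    exact zero_le_one
  obtain ⟨y, hy, hy0⟩ := (Submodule.ne_bot_iff _).mp h
  have hQy : Q y ≠ 0 := fun h => hy0 (hQ hy (rad Q).zero_mem (by rw [h, map_zero]))
  have hle : rad Q ≤ k ∙ y := by
    intro x hx
    obtain ⟨c, hc⟩ := surjective_frobenius k 2 (Q x / Q y)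
    rw [frobenius_def] at hc
    have : x = c • y := hQ hx ((rad Q).smul_mem c hy) (by
      rw [QuadraticMap.map_smul, smul_eq_mul, ← pow_two, hc, div_mul_cancel₀ _ hQy])
    exact this ▸ mem_span_singleton.mpr ⟨c, rfl⟩
  exact (finrank_mono hle).trans (finrank_span_singleton hy0).le

variable [FiniteDimensional k V]

lemma finrank_perp (hQ : rad Q = ⊥) (S : Submodule k V) :
    finrank k (perp Q S) = finrank k V - finrank k S := by
  have hnd : LinearMap.BilinForm.Nondegenerate Q.polarBilin := by
    rw [LinearMap.BilinForm.nondegenerate_iff_ker_eq_bot, ← hQ, rad_eq_orthogonal_top_s17,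
      LinearMap.BilinForm.orthogonal_top_eq_ker]
    intro x y h
    rw [polarBilin_apply_apply] at h ⊢
    rwa [polar_comm]
  rw [perp_eq_orthogonal, LinearMap.BilinForm.finrank_orthogonal hnd]

lemma rad_eq_bot [CharP k 2] [PerfectRing k 2] (hQ : QNondeg Q) (heven : Even (finrank k V)) :
    rad Q = ⊥ := by
  have hrad := (polarBilin_isAlt Q).even_finrank_add_finrank_orthogonal_top
  rw [← rad_eq_orthogonal_top_s17] at hrad
  have := finrank_rad_le_one hQ
  rw [← finrank_eq_zero]
  obtain ⟨a, ha⟩ := heven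
  obtain ⟨b, hb⟩ := hrad
  omega

end Radical

section Lagrangian

variable {k V : Type*} [Field k] [AddCommGroup V] [Module k V]

def IsTotallySingular (Q : QuadraticForm k V) (L : Submodule k V) : Prop :=
  ∀ x ∈ L, Q x = 0

def IsLagrangian (Q : QuadraticForm k V) (L : Submodule k V) : Prop :=
  IsTotallySingular Q L ∧ 2 * finrank k L = finrank k V

variable {Q : QuadraticForm k V} {L M M' P : Submodule k V}

namespace IsTotallySingular

lemma polar_eq_zero (hL : IsTotallySingular Q L) {x y : V} (hx : x ∈ L) (hy : y ∈ L) :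
    polar Q x y = 0 := by
  rw [polar, hL _ (add_mem hx hy), hL x hx, hL y hy, sub_zero, sub_zero]

lemma le_perp (hL : IsTotallySingular Q L) : L ≤ perp Q L :=
  fun _ hx _ hy => hL.polar_eq_zero hx hy

lemma mono (hL : IsTotallySingular Q L) (hML : M ≤ L) : IsTotallySingular Q M :=
  fun x hx => hL x (hML hx)

lemma sup (hL : IsTotallySingular Q L) (hM : IsTotallySingular Q M) (hLM : L ≤ perp Q M) :
    IsTotallySingular Q (L ⊔ M) := by
  intro x hx
  obtain ⟨y, hy, z, hz, rfl⟩ := mem_sup.mp hx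
  rw [QuadraticMap.map_add Q y z, hL y hy, hM z hz, hLM hy z hz, add_zero, add_zero]

end IsTotallySingular

lemma isTotallySingular_span_singleton {x : V} (hx : Q x = 0) :
    IsTotallySingular Q (k ∙ x) := by
  intro y hy
  obtain ⟨c, rfl⟩ := mem_span_singleton.mp hy
  rw [QuadraticMap.map_smul, hx, smul_zero]

lemma IsLagrangian.neg (hL : IsLagrangian Q L) : IsLagrangian (-Q) L :=
  ⟨fun x hx => by rw [FunLike.coe_neg, Pi.neg_apply, hL.1 x hx, neg_zero], hL.2⟩

lemma IsLagrangian.finrank_eq (hL : IsLagrangian Q L) (hM : IsLagrangian Q M) :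
    finrank k L = finrank k M := by
  have := hL.2
  have := hM.2
  omega

variable [FiniteDimensional k V]

namespace IsLagrangian

lemma perp_eq (hQ : rad Q = ⊥) (hL : IsLagrangian Q L) : perp Q L = L := by
  refine (eq_of_le_of_finrank_le hL.1.le_perp ?_).symm
  rw [finrank_perp hQ]
  have := hL.2
  omega

lemma mem_or_mem_of_mem_sup (hQ : rad Q = ⊥) (hM : IsLagrangian Q M) (hM' : IsLagrangian Q M')
    (hMM' : finrank k (M ⊓ M' : Submodule k V) + 1 = finrank k M) {x : V} (hx : x ∈ M ⊔ M')
    (hQx : Q x = 0) : x ∈ M ∨ x ∈ M' := by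
  obtain ⟨u, hu, v, hv, rfl⟩ := mem_sup.mp hx
  by_cases huM' : u ∈ M'
  · exact Or.inr (add_mem huM' hv)
  refine Or.inl (add_mem hu ?_)
  have huv : polar Q u v = 0 := by
    rw [polar, hQx, hM.1 u hu, hM'.1 v hv, sub_zero, sub_zero]
  have hM_eq : (M ⊓ M') ⊔ k ∙ u = M := by
    refine eq_of_le_of_finrank_le (sup_le inf_le_left ((span_singleton_le_iff_mem _ _).mpr hu)) ?_
    rw [finrank_sup_span_singleton fun h => huM' (mem_inf.mp h).2]
    omega
  rw [← hM.perp_eq hQ, ← hM_eq]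
  intro y hy
  obtain ⟨z, hz, _, hcu, rfl⟩ := mem_sup.mp hy
  obtain ⟨c, rfl⟩ := mem_span_singleton.mp hcu
  rw [polar_add_right, polar_smul_right, hM'.1.polar_eq_zero hv (mem_inf.mp hz).2, polar_comm,
    huv, smul_zero, add_zero]

lemma finrank_inf_inf_add_one_le (hQ : rad Q = ⊥) (hL : IsLagrangian Q L)
    (hM : IsLagrangian Q M) (hM' : IsLagrangian Q M')
    (hMM' : finrank k (M ⊓ M' : Submodule k V) + 1 = finrank k M) :
    finrank k (L ⊓ (M ⊓ M') : Submodule k V) + 1 ≤ finrank k (L ⊓ (M ⊔ M') : Submodule k V) := by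
  have hle : L ⊔ (M ⊔ M') ≤ perp Q (L ⊓ (M ⊓ M') : Submodule k V) :=
    sup_le (hL.1.le_perp.trans (perp_le_perp Q inf_le_left)) <|
      sup_le (hM.1.le_perp.trans (perp_le_perp Q (inf_le_right.trans inf_le_left)))
        (hM'.1.le_perp.trans (perp_le_perp Q (inf_le_right.trans inf_le_right)))
  have h₁ := finrank_sup_add_finrank_inf_eq L (M ⊔ M')
  have h₂ := finrank_sup_add_finrank_inf_eq M M'
  have h₃ := finrank_mono hle
  have h₄ := finrank_le (L ⊓ (M ⊓ M'))
  rw [finrank_perp hQ] at h₃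
  have := hL.2
  have := hM.2
  have := hM'.2
  omega

theorem odd_finrank_inf_add_finrank_inf (hQ : rad Q = ⊥) (hL : IsLagrangian Q L)
    (hM : IsLagrangian Q M) (hM' : IsLagrangian Q M')
    (hMM' : finrank k (M ⊓ M' : Submodule k V) + 1 = finrank k M) :
    Odd (finrank k (L ⊓ M : Submodule k V) + finrank k (L ⊓ M' : Submodule k V)) := by
  wlog h : L ⊓ (M ⊔ M') ≤ M generalizing M M'
  · have hM'M : finrank k (M' ⊓ M : Submodule k V) + 1 = finrank k M' := by
      rw [inf_comm, hM'.finrank_eq hM]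
      exact hMM'
    rw [add_comm]
    refine this hM' hM hM'M ?_
    rw [sup_comm]
    exact (AddSubgroupClass.subset_union.mp fun x hx => mem_or_mem_of_mem_sup hQ hM hM' hMM'
      (mem_inf.mp hx).2 (hL.1 x (mem_inf.mp hx).1)).resolve_left h
  have hLM : L ⊓ M = L ⊓ (M ⊔ M') :=
    le_antisymm (inf_le_inf_left L le_sup_left) (le_inf inf_le_left h)
  have hLM' : L ⊓ M' = L ⊓ (M ⊓ M') :=
    le_antisymm (le_inf inf_le_left (le_inf ((inf_le_inf_left L le_sup_right).trans h)
      inf_le_right)) (inf_le_inf_left L inf_le_right)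
  have hlow := finrank_inf_inf_add_one_le hQ hL hM hM' hMM'
  have hup := finrank_sup_add_finrank_inf_eq (L ⊓ M) (M ⊓ M')
  have hsup := finrank_mono (sup_le inf_le_right inf_le_left : L ⊓ M ⊔ M ⊓ M' ≤ M)
  rw [show L ⊓ M ⊓ (M ⊓ M') = L ⊓ (M ⊓ M') by rw [inf_assoc, ← inf_assoc M, inf_idem]] at hup
  rw [hLM] at hup hsup
  rw [hLM, hLM']
  exact ⟨finrank k (L ⊓ (M ⊓ M') : Submodule k V), by omega⟩

lemma finrank_inf_perp_span_singleton_add_one (hQ : rad Q = ⊥) (hM : IsLagrangian Q M) {x : V}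
    (hxM : x ∉ M) : finrank k (M ⊓ perp Q (k ∙ x) : Submodule k V) + 1 = finrank k M := by
  have hlt : M ⊓ perp Q (k ∙ x) < M := by
    refine lt_of_le_of_ne inf_le_left fun h => hxM ?_
    rw [← hM.perp_eq hQ]
    intro y hy
    rw [polar_comm]
    exact (inf_eq_left.mp h) hy x (mem_span_singleton_self x)
  have h₁ := finrank_lt_finrank_of_lt hlt
  have h₂ := finrank_sup_add_finrank_inf_eq M (perp Q (k ∙ x))
  have h₃ := finrank_le (M ⊔ perp Q (k ∙ x))
  have h₄ := finrank_span_singleton (K := k) fun h : x = 0 => hxM (h ▸ M.zero_mem)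
  rw [finrank_perp hQ, h₄] at h₂
  have := hM.2
  omega

/-- The witness is `(M ⊓ perp Q (k ∙ x)) ⊔ k ∙ x` for any `x ∈ P` outside `M`. -/
lemma exists_adjacent_finrank_inf_lt (hQ : rad Q = ⊥) (hM : IsLagrangian Q M)
    (hP : IsLagrangian Q P) (hPM : ¬ P ≤ M) :
    ∃ M' : Submodule k V, IsLagrangian Q M' ∧
      finrank k (M ⊓ M' : Submodule k V) + 1 = finrank k M ∧
      finrank k (M ⊓ P : Submodule k V) < finrank k (M' ⊓ P : Submodule k V) := by
  obtain ⟨x, hxP, hxM⟩ := SetLike.not_le_iff_exists.mp hPM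
  set K := M ⊓ perp Q (k ∙ x)
  have hK : finrank k K + 1 = finrank k M := finrank_inf_perp_span_singleton_add_one hQ hM hxM
  have hxK : x ∉ K := fun h => hxM (mem_inf.mp h).1
  have hM' : IsLagrangian Q (K ⊔ k ∙ x) := by
    refine ⟨(hM.1.mono inf_le_left).sup (isTotallySingular_span_singleton (hP.1 x hxP))
      inf_le_right, ?_⟩
    rw [finrank_sup_span_singleton hxK, hK, hM.2]
  have hxM' : x ∈ K ⊔ k ∙ x := mem_sup_right (mem_span_singleton_self x)
  refine ⟨K ⊔ k ∙ x, hM', ?_, finrank_lt_finrank_of_lt ?_⟩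
  · have hlt : M ⊓ (K ⊔ k ∙ x) < M := by
      refine lt_of_le_of_ne inf_le_left fun h => hxM ?_
      rwa [eq_of_le_of_finrank_eq (inf_eq_left.mp h) (hM.finrank_eq hM')]
    have h₁ := finrank_lt_finrank_of_lt hlt
    have h₂ := finrank_mono (le_inf inf_le_left le_sup_left : K ≤ M ⊓ (K ⊔ k ∙ x))
    omega
  · refine SetLike.lt_iff_le_and_exists.mpr ⟨le_inf (fun y hy => mem_sup_left ?_) inf_le_right,
      x, mem_inf.mpr ⟨hxM', hxP⟩, fun h => hxM (mem_inf.mp h).1⟩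
    refine mem_inf.mpr ⟨(mem_inf.mp hy).1, fun z hz => ?_⟩
    obtain ⟨c, rfl⟩ := mem_span_singleton.mp hz
    rw [polar_smul_right, hP.1.polar_eq_zero (mem_inf.mp hy).2 hxP, smul_zero]

theorem even_sum_finrank_inf (hQ : rad Q = ⊥) (hL : IsLagrangian Q L) (hM : IsLagrangian Q M)
    (hP : IsLagrangian Q P) :
    Even (finrank k (L ⊓ M : Submodule k V) + finrank k (M ⊓ P : Submodule k V) +
      finrank k (L ⊓ P : Submodule k V) + finrank k M) := by
  induction hd : finrank k M - finrank k (M ⊓ P : Submodule k V) using Nat.strong_induction_on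
    generalizing M with
  | _ d ih =>
  by_cases hPM : P ≤ M
  · obtain rfl : P = M := eq_of_le_of_finrank_eq hPM (hP.finrank_eq hM)
    rw [inf_idem]
    exact ⟨finrank k (L ⊓ P : Submodule k V) + finrank k P, by ring⟩
  obtain ⟨M', hM', hMM', hlt⟩ := exists_adjacent_finrank_inf_lt hQ hM hP hPM
  have h₁ := ih _ ?_ hM' rfl
  · have h₂ := hL.odd_finrank_inf_add_finrank_inf hQ hM hM' hMM'
    have h₃ := hP.odd_finrank_inf_add_finrank_inf hQ hM hM' hMM'
    rw [inf_comm P, inf_comm P] at h₃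
    rw [hM'.finrank_eq hM] at h₁
    rw [Nat.even_iff] at h₁ ⊢
    rw [Nat.odd_iff] at h₂ h₃
    omega
  · have := finrank_mono (inf_le_left : M' ⊓ P ≤ M')
    rw [hM'.finrank_eq hM] at this ⊢
    omega

end IsLagrangian

end Lagrangian

section Graph

variable {k V W : Type*} [Field k] [AddCommGroup V] [Module k V] [AddCommGroup W] [Module k W]

lemma finrank_graph (f : V →ₗ[k] W) : finrank k f.graph = finrank k V := by
  rw [LinearMap.graph_eq_range_prod]
  exact LinearMap.finrank_range_of_inj fun a b h => congrArg Prod.fst h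

lemma finrank_graph_inf (f : V →ₗ[k] W) (P : Submodule k (V × W)) :
    finrank k (f.graph ⊓ P : Submodule k (V × W)) =
      finrank k (P.comap (LinearMap.id.prod f)) := by
  rw [LinearMap.graph_eq_range_prod, ← map_comap_eq]
  exact (equivMapOfInjective _ (fun a b h => congrArg Prod.fst h) _).finrank_eq.symm

lemma finrank_graph_inf_graph (f g : V →ₗ[k] W) :
    finrank k (f.graph ⊓ g.graph : Submodule k (V × W)) = finrank k (LinearMap.ker (f - g)) := by
  have : g.graph.comap (LinearMap.id.prod f) = LinearMap.ker (f - g) := by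
    ext x
    rw [mem_comap, LinearMap.mem_graph_iff, LinearMap.mem_ker, LinearMap.sub_apply, sub_eq_zero]
    exact Iff.rfl
  rw [finrank_graph_inf, this]

lemma finrank_graph_inf_prod (f : V →ₗ[k] W) (S : Submodule k V) (T : Submodule k W) :
    finrank k (f.graph ⊓ S.prod T : Submodule k (V × W)) =
      finrank k (S ⊓ T.comap f : Submodule k V) := by
  rw [finrank_graph_inf, LinearMap.comap_prod_prod, comap_id]

lemma finrank_submodule_prod [FiniteDimensional k V] [FiniteDimensional k W] (S : Submodule k V)
    (T : Submodule k W) : finrank k (S.prod T) = finrank k S + finrank k T := by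
  have := LinearMap.finrank_range_of_inj (f := S.subtype.prodMap T.subtype)
    (Prod.map_injective.mpr ⟨S.injective_subtype, T.injective_subtype⟩)
  rwa [LinearMap.range_prodMap, range_subtype, range_subtype, finrank_prod] at this

lemma finrank_inf_map_eq_finrank_inf_comap {f : V →ₗ[k] V} (hf : Function.Bijective f)
    (S : Submodule k V) :
    finrank k (S ⊓ S.map f : Submodule k V) = finrank k (S ⊓ S.comap f : Submodule k V) := by
  rw [(equivMapOfInjective f hf.1 (S ⊓ S.comap f)).finrank_eq, map_inf f hf.1,
    map_comap_eq_of_surjective hf.2, inf_comm]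

end Graph

section DoubledSpace

variable {k V W : Type*} [Field k] [AddCommGroup V] [Module k V] [AddCommGroup W] [Module k W]
  [FiniteDimensional k V] [FiniteDimensional k W] {Q : QuadraticForm k V}

lemma IsLagrangian.prod {Q' : QuadraticForm k W} {S : Submodule k V} {T : Submodule k W}
    (hS : IsLagrangian Q S) (hT : IsLagrangian Q' T) : IsLagrangian (Q.prod Q') (S.prod T) := by
  refine ⟨fun x hx => ?_, ?_⟩
  · rw [QuadraticMap.prod_apply, hS.1 _ (mem_prod.mp hx).1, hT.1 _ (mem_prod.mp hx).2, add_zero]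
  · rw [finrank_submodule_prod, finrank_prod, ← hS.2, ← hT.2, mul_add]

lemma isLagrangian_graph {f : V →ₗ[k] V} (hf : ∀ x, Q (f x) = Q x) :
    IsLagrangian (Q.prod (-Q)) f.graph := by
  refine ⟨fun x hx => ?_, ?_⟩
  · rw [LinearMap.mem_graph_iff] at hx
    rw [QuadraticMap.prod_apply, hx, FunLike.coe_neg, Pi.neg_apply, hf, add_neg_cancel]
  · rw [finrank_graph, finrank_prod, two_mul]

end DoubledSpace

lemma map_one_add_apply_of_mem_Mtilde {k V : Type*} [Field k] [AddCommGroup V] [Module k V]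
    {Q : QuadraticForm k V} {N : Module.End k V} (hN : N ∈ Mtilde Q) (x : V) :
    Q ((1 + N) x) = Q x := by
  rw [LinearMap.add_apply, Module.End.one_apply, QuadraticMap.map_add Q, hN.2 x, add_assoc,
    neg_add_cancel, add_zero]

/-- in characteristic 2 with `dim V = D` even and `Q` nondegenerate, for
`N ∈ 𝓜̃_Q` and every maximal totally singular subspace `S` (`dim S = D/2`, `Q|_S = 0`),
`dim(S/(S ∩ (1+N)(S))) ≡ dim ker N (mod 2)`. -/
theorem stmt17 [Field k] [CharP k 2] (hk : Finite k ∨ IsAlgClosed k)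
    [AddCommGroup V] [Module k V] [FiniteDimensional k V]
    (heven : Even (Module.finrank k V))
    (Q : QuadraticForm k V) (hQ : QNondeg Q) (N : Module.End k V) (hN : N ∈ Mtilde Q) :
    ∀ S : Submodule k V, Module.finrank k S = Module.finrank k V / 2 →
      (∀ x ∈ S, Q x = 0) →
      Module.finrank k S - Module.finrank k (S ⊓ Submodule.map (1 + N) S : Submodule k V) ≡
        Module.finrank k (LinearMap.ker N) [MOD 2] := by
  intro S hS hSQ
  have : PerfectRing k 2 := by rcases hk with hk | hk <;> infer_instance
  have hrad : rad (Q.prod (-Q)) = ⊥ := by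
    rw [rad_prod, rad_neg, rad_eq_bot hQ heven, prod_bot]
  have hSL : IsLagrangian Q S := ⟨hSQ, by obtain ⟨t, ht⟩ := heven; omega⟩
  have key := (isLagrangian_graph (map_one_add_apply_of_mem_Mtilde hN)).even_sum_finrank_inf
    hrad (isLagrangian_graph (f := LinearMap.id) fun _ => rfl) (hSL.prod hSL.neg)
  rw [finrank_graph_inf_graph, finrank_graph_inf_prod, finrank_graph_inf_prod, finrank_graph,
    comap_id, inf_idem, ← Module.End.one_eq_id, add_sub_cancel_left] at key
  have hbij : Function.Bijective ⇑(1 + N) := (Module.End.isUnit_iff _).mp hN.1.isUnit_one_add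
  have hle := finrank_mono (inf_le_left : S ⊓ S.comap (1 + N) ≤ S)
  rw [Nat.ModEq, finrank_inf_map_eq_finrank_inf_comap hbij]
  obtain ⟨a, ha⟩ := key
  obtain ⟨t, ht⟩ := heven
  omega
end
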